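/- arXiv:2602.05065 — 7 statements merged into one kernel-verified Lean document; each statement's English description precedes it below -/
import Mathlib

section
/- Let f : ℝ^n → ℝ be twice continuously differentiable and let A be a symmetric n×n real matrix such that f(exp(λA) x) = f(x) for all x ∈ ℝ^n and all λ ∈ ℝ. Then for every θ ∈ ℝ^n and every λ ∈ ℝ, the trace of the Hessian satisfies Tr(Hess f (exp(λA) θ)) = Tr(exp(−2λA) · Hess f(θ)). -/
open Matrix

/-- The Hessian matrix of `f : ℝ^n → ℝ` at `x`, with entries the second partial
derivatives, obtained from the second iterated Fréchet derivative. -/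
noncomputable def hessianMatrix {n : ℕ} (f : (Fin n → ℝ) → ℝ) (x : Fin n → ℝ) :
    Matrix (Fin n) (Fin n) ℝ :=
  Matrix.of fun i j => iteratedFDeriv ℝ 2 f x ![Pi.single i 1, Pi.single j 1]

/-! The Hessian transforms as a bilinear form under a linear change of variables:
`Hess (f ∘ M) x = Mᵀ · Hess f (M x) · M`. Invariance of `f` under `N = exp (-λA)` therefore gives
`Hess f (exp (λA) θ) = Nᵀ · Hess f θ · N = N · Hess f θ · N`, as `A` is symmetric, and cyclicity of
the trace turns this into `Tr (N² · Hess f θ)` with `N² = exp (-2λA)`. -/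

theorem bilinearIteratedFDerivTwo_comp_continuousLinearMap {E G F : Type*}
    [NormedAddCommGroup E] [NormedSpace ℝ E] [NormedAddCommGroup G] [NormedSpace ℝ G]
    [NormedAddCommGroup F] [NormedSpace ℝ F] {f : E → F} (hf : ContDiff ℝ 2 f)
    (g : G →L[ℝ] E) (x : G) :
    bilinearIteratedFDerivTwo ℝ (f ∘ g) x
      = (bilinearIteratedFDerivTwo ℝ f (g x)).compl₁₂ (g : G →ₗ[ℝ] E) g := by
  ext u v
  simp only [LinearMap.compl₁₂_apply, ContinuousLinearMap.coe_coe,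
    bilinearIteratedFDerivTwo_eq_iteratedFDeriv, g.iteratedFDeriv_comp_right hf x le_rfl,
    ContinuousMultilinearMap.compContinuousLinearMap_apply]
  congr 1
  ext i : 1
  fin_cases i <;> rfl

theorem hessianMatrix_eq_toMatrix₂' {n : ℕ} (f : (Fin n → ℝ) → ℝ) (x : Fin n → ℝ) :
    hessianMatrix f x = LinearMap.toMatrix₂' ℝ (bilinearIteratedFDerivTwo ℝ f x) := by
  ext i j
  rw [LinearMap.toMatrix₂'_apply, bilinearIteratedFDerivTwo_eq_iteratedFDeriv]
  rfl

theorem hessianMatrix_comp_mulVec {m n : ℕ} {f : (Fin m → ℝ) → ℝ} (hf : ContDiff ℝ 2 f)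
    (M : Matrix (Fin m) (Fin n) ℝ) (x : Fin n → ℝ) :
    hessianMatrix (fun y => f (M *ᵥ y)) x = Mᵀ * hessianMatrix f (M *ᵥ x) * M := by
  have := congrArg (LinearMap.toMatrix₂' ℝ) <|
    bilinearIteratedFDerivTwo_comp_continuousLinearMap hf (Matrix.toLin' M).toContinuousLinearMap x
  rw [LinearMap.toMatrix₂'_compl₁₂, LinearMap.coe_toContinuousLinearMap,
    LinearMap.toMatrix'_toLin'] at this
  rwa [hessianMatrix_eq_toMatrix₂', hessianMatrix_eq_toMatrix₂']

theorem Matrix.exp_smul_mul_exp_smul {m : Type*} [Fintype m] [DecidableEq m]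
    (A : Matrix m m ℝ) (s t : ℝ) :
    NormedSpace.exp (s • A) * NormedSpace.exp (t • A) = NormedSpace.exp ((s + t) • A) := by
  rw [add_smul, Matrix.exp_add_of_commute _ _ (((Commute.refl A).smul_left s).smul_right t)]

theorem Matrix.IsSymm.exp_smul {m : Type*} [Fintype m] [DecidableEq m]
    {A : Matrix m m ℝ} (hA : A.IsSymm) (s : ℝ) : (NormedSpace.exp (s • A)).IsSymm := by
  rw [Matrix.IsSymm, ← Matrix.exp_transpose, Matrix.transpose_smul, hA.eq]

/-- If `f : ℝ^n → ℝ` is `C²` and `A` is a symmetric matrix such that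
`f (exp (λ A) x) = f x` for all `x` and `λ`, then
`Tr (Hess f (exp (λ A) θ)) = Tr (exp (−2 λ A) ⬝ Hess f θ)` for all `θ` and `λ`. -/
theorem trace_hessian_exp_symmetry {n : ℕ} (f : (Fin n → ℝ) → ℝ)
    (hf : ContDiff ℝ 2 f) (A : Matrix (Fin n) (Fin n) ℝ) (hA : Aᵀ = A)
    (hinv : ∀ (lam : ℝ) (x : Fin n → ℝ),
      f ((NormedSpace.exp (lam • A)).mulVec x) = f x) :
    ∀ (θ : Fin n → ℝ) (lam : ℝ),
      (hessianMatrix f ((NormedSpace.exp (lam • A)).mulVec θ)).trace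
        = (NormedSpace.exp ((-2 * lam) • A) * hessianMatrix f θ).trace := by
  intro θ lam
  set M := NormedSpace.exp (lam • A)
  set N := NormedSpace.exp ((-lam) • A)
  have hNM : N * M = 1 := by
    rw [Matrix.exp_smul_mul_exp_smul, neg_add_cancel, zero_smul, NormedSpace.exp_zero]
  have hfN : (fun y => f (N *ᵥ y)) = f := funext (hinv (-lam))
  have hH : hessianMatrix f (M *ᵥ θ) = N * hessianMatrix f θ * N := by
    calc hessianMatrix f (M *ᵥ θ)
        = hessianMatrix (fun y => f (N *ᵥ y)) (M *ᵥ θ) := by rw [hfN]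
      _ = Nᵀ * hessianMatrix f (N *ᵥ M *ᵥ θ) * N := hessianMatrix_comp_mulVec hf N _
      _ = N * hessianMatrix f θ * N := by
        rw [Matrix.mulVec_mulVec, hNM, Matrix.one_mulVec, (Matrix.IsSymm.exp_smul hA _).eq]
  rw [hH, Matrix.trace_mul_cycle, Matrix.exp_smul_mul_exp_smul,
    show -lam + -lam = -2 * lam by ring]
end

section
/- Let A and H be symmetric n×n real matrices, with H positive semidefinite, and assume A·H ≠ 0 (matrix product not the zero matrix). Then limsup_{|λ|→∞} Tr(exp(−2λA) H) = +∞; that is, for every R > 0 there exists λ with |λ| arbitrarily large such that Tr(exp(−2λA) H) > R. -/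
/-!
Diagonalise `A = U diag(d) Uᵀ` and put `M = Uᵀ H U`, again positive semidefinite. Then
`Tr(exp(t A) H) = ∑ₖ e^{t dₖ} Mₖₖ`, a sum of nonnegative terms. Since `A H ≠ 0`, the row `i` of
`diag(d) M` is nonzero for some `i`, so `dᵢ ≠ 0` and `M` has a nonzero entry in row `i`, which
for a positive semidefinite matrix forces `Mᵢᵢ > 0`. The single term `e^{t dᵢ} Mᵢᵢ` is unbounded
as `t → ±∞` (with the sign of `dᵢ`).
-/

open Matrix Filter
open scoped ComplexOrder

namespace Matrix

variable {n : Type*} [Fintype n] [DecidableEq n]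

section RCLike

variable {𝕜 : Type*} [RCLike 𝕜]

theorem PosSemidef.apply_eq_zero_of_diag_eq_zero {M : Matrix n n 𝕜} (hM : M.PosSemidef) {i : n}
    (hi : M i i = 0) (j : n) : M i j = 0 := by
  have hcol : M *ᵥ Pi.single i 1 = 0 :=
    (hM.dotProduct_mulVec_zero_iff _).mp (by simpa using hi)
  have hji : M j i = 0 := by simpa using congrFun hcol j
  rw [← hM.isHermitian.apply i j, hji, star_zero]

noncomputable def IsHermitian.inEigenbasis {A : Matrix n n 𝕜} (hA : A.IsHermitian)
    (H : Matrix n n 𝕜) : Matrix n n 𝕜 :=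
  star (hA.eigenvectorUnitary : Matrix n n 𝕜) * H * hA.eigenvectorUnitary

theorem PosSemidef.inEigenbasis {A H : Matrix n n 𝕜} (hA : A.IsHermitian) (hH : H.PosSemidef) :
    (hA.inEigenbasis H).PosSemidef :=
  hH.conjTranspose_mul_mul_same _

end RCLike

variable {A H : Matrix n n ℝ}

theorem IsHermitian.trace_exp_smul_mul (hA : A.IsHermitian) (t : ℝ) (H : Matrix n n ℝ) :
    (NormedSpace.exp (t • A) * H).trace =
      ∑ k, Real.exp (t * hA.eigenvalues k) * hA.inEigenbasis H k k := by
  set U : Matrix n n ℝ := (hA.eigenvectorUnitary : Matrix n n ℝ)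
  have hU : IsUnit U := (Unitary.toUnits hA.eigenvectorUnitary).isUnit
  have hUinv : U⁻¹ = star U := inv_eq_left_inv (Unitary.coe_star_mul_self _)
  have hUU : U * star U = 1 := Unitary.coe_mul_star_self _
  have hdiag : star U * A * U = diagonal hA.eigenvalues := by
    simpa using hA.conjStarAlgAut_star_eigenvectorUnitary
  have hexp : star U * NormedSpace.exp (t • A) * U =
      diagonal fun k => Real.exp (t * hA.eigenvalues k) := by
    rw [← hUinv, ← exp_conj' U _ hU, hUinv, mul_smul_comm, smul_mul_assoc, hdiag,
      ← diagonal_smul, exp_diagonal]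
    congr 1
    ext k
    simp [Real.exp_eq_exp_ℝ]
  calc (NormedSpace.exp (t • A) * H).trace
      = (star U * NormedSpace.exp (t • A) * U * (star U * H * U)).trace := by
        rw [show star U * NormedSpace.exp (t • A) * U * (star U * H * U) =
            star U * (NormedSpace.exp (t • A) * H * U) by
          simp only [mul_assoc, ← mul_assoc U (star U), hUU, one_mul],
          trace_mul_comm (star U), mul_assoc, mul_assoc, hUU, mul_one]
    _ = _ := by
        rw [hexp]
        simp [trace, diagonal_mul, IsHermitian.inEigenbasis, U]

theorem IsHermitian.exp_mul_inEigenbasis_le_trace_exp_smul_mul (hA : A.IsHermitian)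
    (hH : H.PosSemidef) (t : ℝ) (i : n) :
    Real.exp (t * hA.eigenvalues i) * hA.inEigenbasis H i i ≤
      (NormedSpace.exp (t • A) * H).trace := by
  rw [hA.trace_exp_smul_mul]
  exact Finset.single_le_sum
    (f := fun k => Real.exp (t * hA.eigenvalues k) * hA.inEigenbasis H k k) (fun k _ => mul_nonneg (Real.exp_pos _).le (hH.inEigenbasis hA).diag_nonneg)
    (Finset.mem_univ i)

theorem IsHermitian.exists_eigenvalue_ne_zero_and_inEigenbasis_pos (hA : A.IsHermitian)
    (hH : H.PosSemidef) (hAH : A * H ≠ 0) :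
    ∃ i, hA.eigenvalues i ≠ 0 ∧ 0 < hA.inEigenbasis H i i := by
  set U : Matrix n n ℝ := (hA.eigenvectorUnitary : Matrix n n ℝ)
  have hM := hH.inEigenbasis hA
  have hUU : U * star U = 1 := Unitary.coe_mul_star_self _
  have hdiag : star U * A * U = diagonal hA.eigenvalues := by
    simpa using hA.conjStarAlgAut_star_eigenvectorUnitary
  by_contra! h
  refine hAH ?_
  have hDM : diagonal hA.eigenvalues * hA.inEigenbasis H = 0 := by
    ext i j
    rw [diagonal_mul, zero_apply]
    by_cases hi : hA.eigenvalues i = 0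
    · rw [hi, zero_mul]
    · rw [hM.apply_eq_zero_of_diag_eq_zero (le_antisymm (h i hi) hM.diag_nonneg) j, mul_zero]
  calc A * H = U * (star U * A * U * hA.inEigenbasis H) * star U := by
        simp only [IsHermitian.inEigenbasis, U, mul_assoc, ← mul_assoc U (star U), hUU, one_mul,
          mul_one]
    _ = 0 := by rw [hdiag, hDM, mul_zero, zero_mul]

end Matrix

theorem exists_le_abs_and_lt_of_exp_mul_le {f : ℝ → ℝ} {a m : ℝ} (ha : a ≠ 0) (hm : 0 < m)
    (hf : ∀ x, Real.exp (a * x) * m ≤ f x) (R c : ℝ) : ∃ x, c ≤ |x| ∧ R < f x := by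
  obtain ⟨t, hRt, hct⟩ := ((Real.tendsto_exp_atTop.atTop_mul_const hm).eventually_gt_atTop R
    |>.and (eventually_ge_atTop (|c| * |a|))).exists
  refine ⟨t / a, ?_, ?_⟩
  · rw [abs_div, le_div_iff₀ (abs_pos.mpr ha)]
    calc c * |a| ≤ |c| * |a| := by gcongr; exact le_abs_self c
      _ ≤ |t| := hct.trans (le_abs_self t)
  · calc R < Real.exp t * m := hRt
      _ = Real.exp (a * (t / a)) * m := by rw [mul_div_cancel₀ _ ha]
      _ ≤ f (t / a) := hf _

/-- Lemma 1 of the paper (exponential symmetries give unbounded sharpness):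
if `A` and `H` are symmetric `n×n` real matrices, `H` is positive semidefinite and
`A * H ≠ 0`, then `limsup_{|λ|→∞} Tr(exp (−2λA) H) = +∞`: for every `R > 0` and every
bound `c` there is `λ` with `|λ| ≥ c` and `Tr(exp (−2λA) H) > R`. -/
theorem limsup_trace_exp_eq_top {n : ℕ} (A H : Matrix (Fin n) (Fin n) ℝ)
    (hA : Aᵀ = A) (hH : H.PosSemidef) (hAH : A * H ≠ 0) :
    ∀ R : ℝ, 0 < R → ∀ c : ℝ, ∃ lam : ℝ, c ≤ |lam| ∧
      R < (NormedSpace.exp ((-2 * lam) • A) * H).trace := by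
  intro R _ c
  have hA' : A.IsHermitian := isHermitian_iff_isSymm.mpr hA
  obtain ⟨i, hi, hMi⟩ := hA'.exists_eigenvalue_ne_zero_and_inEigenbasis_pos hH hAH
  refine exists_le_abs_and_lt_of_exp_mul_le (a := -2 * hA'.eigenvalues i) (by simpa using hi) hMi
    (fun lam => ?_) R c
  calc _ = Real.exp (-2 * lam * hA'.eigenvalues i) * _ := by ring_nf
    _ ≤ _ := hA'.exp_mul_inEigenbasis_le_trace_exp_smul_mul hH _ i
end

section
/- Let f : ℝ^n → ℝ be continuous and coercive (f(θ) → +∞ as ‖θ‖ → ∞), and let S : ℝ^n → ℝ be continuous. Let (η_k) be a sequence of positive reals with η_k → 0, and suppose that for each k, θ_k is a global minimizer of θ ↦ f(θ) + η_k S(θ), and that θ_k → θ̄ as k → ∞. Then θ̄ is a global minimizer of f, and moreover θ̄ minimizes S over the set M := {θ : f(θ) = inf f}; that is, S(θ̄) ≤ S(y) for every y ∈ M. -/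
open Filter

/-- The Minimal Fluctuation Lemma: let `f : ℝ^n → ℝ` be continuous and coercive and
`S : ℝ^n → ℝ` continuous. Let `η k > 0` with `η k → 0`, let `θk k` be a global
minimizer of `θ ↦ f θ + η k * S θ` for each `k`, and assume `θk → θ̄`. Then `θ̄`
is a global minimizer of `f`, and `S θ̄ ≤ S y` for every global minimizer `y` of `f`. -/
theorem minimal_fluctuation_lemma {n : ℕ} (f S : (Fin n → ℝ) → ℝ)
    (hf : Continuous f)
    (hcoercive : Tendsto f (comap (fun θ : Fin n → ℝ => ‖θ‖) atTop) atTop)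
    (hS : Continuous S)
    (η : ℕ → ℝ) (hη_pos : ∀ k, 0 < η k) (hη_lim : Tendsto η atTop (nhds 0))
    (θk : ℕ → (Fin n → ℝ))
    (hmin : ∀ k θ, f (θk k) + η k * S (θk k) ≤ f θ + η k * S θ)
    (θbar : Fin n → ℝ) (hconv : Tendsto θk atTop (nhds θbar)) :
    (∀ y, f θbar ≤ f y) ∧ (∀ y, (∀ z, f y ≤ f z) → S θbar ≤ S y) := by
  have hfθ : Tendsto (fun k => f (θk k)) atTop (nhds (f θbar)) :=
    (hf.tendsto θbar).comp hconv
  have hSθ : Tendsto (fun k => S (θk k)) atTop (nhds (S θbar)) :=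
    (hS.tendsto θbar).comp hconv
  have hsum : Tendsto (fun k => f (θk k) + η k * S (θk k)) atTop (nhds (f θbar)) := by
    have := hfθ.add (hη_lim.mul hSθ)
    simpa using this
  constructor
  · intro y
    have hrhs : Tendsto (fun k => f y + η k * S y) atTop (nhds (f y)) := by
      have := (tendsto_const_nhds (x := f y) (f := atTop)).add (hη_lim.mul (tendsto_const_nhds (x := S y) (f := atTop)))
      simpa using this
    exact le_of_tendsto_of_tendsto' hsum hrhs (fun k => hmin k y)
  · intro y hy
    refine le_of_tendsto hSθ (Filter.Eventually.of_forall fun k => ?_)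
    have h1 := hmin k y
    have h2 : f y ≤ f (θk k) := hy _
    have h3 : η k * S (θk k) ≤ η k * S y := by linarith
    exact le_of_mul_le_mul_left h3 (hη_pos k)
end

section
/- Let W_1 ∈ ℝ^{h×d_x}, W_2 ∈ ℝ^{d_y×h}, let Σ_x ∈ ℝ^{d_x×d_x} be symmetric positive semidefinite, and for x ∈ ℝ^{d_x}, y ∈ ℝ^{d_y} let ℓ(x,y,W_2,W_1) = ½‖y − W_2 W_1 x‖². Then for every x and y, the trace of the full Hessian of ℓ with respect to the concatenated parameters (W_1, W_2) equals Tr(W_2ᵀW_2)·‖x‖² + d_y·xᵀW_1ᵀW_1 x. Consequently, if x is a random vector with E[xxᵀ] = Σ_x, then T(W_2,W_1) := E[Tr ∇²ℓ] = ‖W_2‖_F²·Tr(Σ_x) + d_y·Tr(W_1ᵀ W_1 Σ_x). -/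
open Matrix MeasureTheory

/-- The parameter space of a two-layer linear network: the entries of
`W₁ ∈ ℝ^{h×dx}` and `W₂ ∈ ℝ^{dy×h}`, concatenated into one vector. -/
abbrev TwoLayerParams (h dx dy : ℕ) := ((Fin h × Fin dx) ⊕ (Fin dy × Fin h)) → ℝ

/-- The first-layer weight matrix encoded in a parameter vector. -/
def firstLayer {h dx dy : ℕ} (θ : TwoLayerParams h dx dy) : Matrix (Fin h) (Fin dx) ℝ :=
  Matrix.of fun i j => θ (Sum.inl (i, j))

/-- The second-layer weight matrix encoded in a parameter vector. -/
def secondLayer {h dx dy : ℕ} (θ : TwoLayerParams h dx dy) : Matrix (Fin dy) (Fin h) ℝ :=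
  Matrix.of fun i j => θ (Sum.inr (i, j))

/-- The loss `ℓ(x,y,W₂,W₁) = ½‖y − W₂W₁x‖²` as a function of the parameter vector. -/
noncomputable def twoLayerLoss {h dx dy : ℕ} (x : Fin dx → ℝ) (y : Fin dy → ℝ)
    (θ : TwoLayerParams h dx dy) : ℝ :=
  (1 / 2) * ∑ i, (y i - ((secondLayer θ * firstLayer θ).mulVec x) i) ^ 2

/-- The trace of the Hessian of `g : ℝ^ι → ℝ` at `θ`: the sum of the pure second
derivatives along the coordinate directions. -/
noncomputable def hessianTrace {ι : Type*} [Fintype ι] [DecidableEq ι]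
    (g : (ι → ℝ) → ℝ) (θ : ι → ℝ) : ℝ :=
  ∑ b : ι, iteratedFDeriv ℝ 2 g θ ![Pi.single b 1, Pi.single b 1]

/-!
Along a coordinate direction `v` of parameter space only one layer moves, so
`secondLayer v * firstLayer v = 0` and the prediction `(W₂ + tV₂)(W₁ + tV₁)x` is affine in `t`.
The loss restricted to that line is therefore `½‖r - t a‖²`, whose second derivative is `‖a‖²`:
for the entry `(k, j)` of `W₁` one gets `a = W₂ eₖ xⱼ`, for the entry `(i, k)` of `W₂` one gets
`a = (W₁x)ₖ eᵢ`. Summing these gives the trace formula, and the expected trace follows by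
linearity from `∫ xᵀMx = Tr(M Σₓ)`.
-/

section LineRestriction

variable {𝕜 E F : Type*} [NontriviallyNormedField 𝕜] [NormedAddCommGroup E] [NormedSpace 𝕜 E]
  [NormedAddCommGroup F] [NormedSpace 𝕜 F]

theorem DifferentiableAt.hasDerivAt_comp_add_smul {G : E → F} {θ v : E} {t : 𝕜}
    (hG : DifferentiableAt 𝕜 G (θ + t • v)) :
    HasDerivAt (fun s : 𝕜 => G (θ + s • v)) (fderiv 𝕜 G (θ + t • v) v) t := by
  simpa [Function.comp_def] using
    hG.hasFDerivAt.comp_hasDerivAt t (((hasDerivAt_id t).smul_const v).const_add θ)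

theorem ContDiff.iteratedFDeriv_two_apply_self_eq_deriv_deriv {g : E → F} (hg : ContDiff 𝕜 2 g)
    (θ v : E) :
    iteratedFDeriv 𝕜 2 g θ ![v, v] = deriv (deriv fun t : 𝕜 => g (θ + t • v)) 0 := by
  have hfirst : deriv (fun t : 𝕜 => g (θ + t • v)) = fun t => fderiv 𝕜 g (θ + t • v) v :=
    funext fun t => (hg.differentiable (by norm_num) _).hasDerivAt_comp_add_smul.deriv
  have hsecond : HasDerivAt (fun t : 𝕜 => fderiv 𝕜 g (θ + t • v))
      (fderiv 𝕜 (fderiv 𝕜 g) θ v) 0 := by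
    simpa using ((hg.fderiv_right (m := 1) (by norm_num)).differentiable (by norm_num)
      (θ + (0 : 𝕜) • v)).hasDerivAt_comp_add_smul
  rw [iteratedFDeriv_two_apply, hfirst]
  exact ((ContinuousLinearMap.apply 𝕜 F v).hasFDerivAt.comp_hasDerivAt 0 hsecond).deriv.symm

end LineRestriction

theorem deriv_deriv_half_sum_sq_sub_mul {ι : Type*} [Fintype ι] (r a : ι → ℝ) :
    deriv (deriv fun t : ℝ => (1 / 2) * ∑ i, (r i - t * a i) ^ 2) 0 = ∑ i, a i ^ 2 := by
  have hfirst : deriv (fun t : ℝ => (1 / 2) * ∑ i, (r i - t * a i) ^ 2)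
      = fun t => ∑ i, (t * a i - r i) * a i := by
    funext t
    have hderiv := (HasDerivAt.fun_sum (u := Finset.univ) fun i _ =>
      (((hasDerivAt_id' t).mul_const (a i)).const_sub (r i)).pow 2).const_mul (1 / 2 : ℝ)
    refine (hderiv.congr_deriv ?_).deriv
    simp only [Finset.mul_sum]
    exact Finset.sum_congr rfl fun i _ => by ring
  have hsecond : HasDerivAt (fun t : ℝ => ∑ i, (t * a i - r i) * a i) (∑ i, a i ^ 2) 0 := by
    refine (HasDerivAt.fun_sum (u := Finset.univ) fun i _ =>
      (((hasDerivAt_id' (0 : ℝ)).mul_const (a i)).sub_const (r i)).mul_const (a i)).congr_deriv ?_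
    simp [sq]
  rw [hfirst, hsecond.deriv]

section Layers

variable {h dx dy : ℕ}

theorem firstLayer_add_smul (θ v : TwoLayerParams h dx dy) (t : ℝ) :
    firstLayer (θ + t • v) = firstLayer θ + t • firstLayer v := rfl

theorem secondLayer_add_smul (θ v : TwoLayerParams h dx dy) (t : ℝ) :
    secondLayer (θ + t • v) = secondLayer θ + t • secondLayer v := rfl

theorem firstLayer_single_inl (k : Fin h) (j : Fin dx) :
    firstLayer (Pi.single (Sum.inl (k, j)) 1 : TwoLayerParams h dx dy) = single k j 1 := by
  ext k' j'
  simp [firstLayer, Pi.single_apply, single_apply, eq_comm]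

theorem secondLayer_single_inl (k : Fin h) (j : Fin dx) :
    secondLayer (Pi.single (Sum.inl (k, j)) 1 : TwoLayerParams h dx dy) = 0 := by
  ext i k'
  simp [secondLayer]

theorem firstLayer_single_inr (i : Fin dy) (k : Fin h) :
    firstLayer (Pi.single (Sum.inr (i, k)) 1 : TwoLayerParams h dx dy) = 0 := by
  ext k' j
  simp [firstLayer]

theorem secondLayer_single_inr (i : Fin dy) (k : Fin h) :
    secondLayer (Pi.single (Sum.inr (i, k)) 1 : TwoLayerParams h dx dy) = single i k 1 := by
  ext i' k'
  simp [secondLayer, Pi.single_apply, single_apply, eq_comm, and_comm]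

end Layers

section Loss

variable {h dx dy : ℕ} (x : Fin dx → ℝ) (y : Fin dy → ℝ)

theorem contDiff_twoLayerLoss : ContDiff ℝ 2 (twoLayerLoss (h := h) x y) := by
  unfold twoLayerLoss secondLayer firstLayer
  simp only [mulVec, mul_apply, dotProduct, of_apply]
  fun_prop

theorem twoLayerLoss_add_smul (θ v : TwoLayerParams h dx dy) (t : ℝ)
    (hv : secondLayer v * firstLayer v = 0) :
    twoLayerLoss x y (θ + t • v) = (1 / 2) * ∑ i, ((y - (secondLayer θ * firstLayer θ) *ᵥ x) i
      - t * ((secondLayer v * firstLayer θ + secondLayer θ * firstLayer v) *ᵥ x) i) ^ 2 := by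
  have hprod : (secondLayer θ + t • secondLayer v) * (firstLayer θ + t • firstLayer v)
      = secondLayer θ * firstLayer θ
        + t • (secondLayer v * firstLayer θ + secondLayer θ * firstLayer v) := by
    simp only [Matrix.add_mul, Matrix.mul_add, Matrix.smul_mul, Matrix.mul_smul, hv,
      smul_zero, smul_add]
    abel
  unfold twoLayerLoss
  rw [firstLayer_add_smul, secondLayer_add_smul, hprod, add_mulVec, smul_mulVec]
  simp only [Pi.add_apply, Pi.smul_apply, Pi.sub_apply, smul_eq_mul]
  congr 1
  exact Finset.sum_congr rfl fun i _ => by ring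

theorem iteratedFDeriv_twoLayerLoss_apply_self (θ v : TwoLayerParams h dx dy)
    (hv : secondLayer v * firstLayer v = 0) :
    iteratedFDeriv ℝ 2 (twoLayerLoss x y) θ ![v, v]
      = ∑ i, ((secondLayer v * firstLayer θ + secondLayer θ * firstLayer v) *ᵥ x) i ^ 2 := by
  rw [(contDiff_twoLayerLoss x y).iteratedFDeriv_two_apply_self_eq_deriv_deriv,
    funext (twoLayerLoss_add_smul x y θ v · hv), deriv_deriv_half_sum_sq_sub_mul]

theorem iteratedFDeriv_twoLayerLoss_single_inl (θ : TwoLayerParams h dx dy) (k : Fin h)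
    (j : Fin dx) :
    iteratedFDeriv ℝ 2 (twoLayerLoss x y) θ
        ![Pi.single (Sum.inl (k, j)) 1, Pi.single (Sum.inl (k, j)) 1]
      = ∑ i, (secondLayer θ i k * x j) ^ 2 := by
  rw [iteratedFDeriv_twoLayerLoss_apply_self x y θ _ (by simp [secondLayer_single_inl]),
    secondLayer_single_inl, firstLayer_single_inl, Matrix.zero_mul, zero_add, ← mulVec_mulVec,
    single_mulVec, one_mul, ← Pi.single, mulVec_single]
  simp

theorem iteratedFDeriv_twoLayerLoss_single_inr (θ : TwoLayerParams h dx dy) (i : Fin dy)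
    (k : Fin h) :
    iteratedFDeriv ℝ 2 (twoLayerLoss x y) θ
        ![Pi.single (Sum.inr (i, k)) 1, Pi.single (Sum.inr (i, k)) 1]
      = (firstLayer θ *ᵥ x) k ^ 2 := by
  rw [iteratedFDeriv_twoLayerLoss_apply_self x y θ _ (by simp [firstLayer_single_inr]),
    secondLayer_single_inr, firstLayer_single_inr, Matrix.mul_zero, add_zero, ← mulVec_mulVec,
    single_mulVec]
  simp [Function.update_apply]

end Loss

section Quadratic

variable {m n : Type*} [Fintype m] [Fintype n]

theorem Matrix.trace_transpose_mul_self (A : Matrix m n ℝ) :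
    (Aᵀ * A).trace = ∑ j, ∑ i, A i j ^ 2 := by
  simp only [trace, diag, mul_apply, transpose_apply, sq]

theorem Matrix.dotProduct_transpose_mul_self_mulVec (A : Matrix m n ℝ) (x : n → ℝ) :
    x ⬝ᵥ (Aᵀ * A) *ᵥ x = A *ᵥ x ⬝ᵥ A *ᵥ x := by
  rw [← mulVec_mulVec, dotProduct_mulVec, vecMul_transpose]

end Quadratic

theorem hessianTrace_twoLayerLoss {h dx dy : ℕ} (x : Fin dx → ℝ) (y : Fin dy → ℝ)
    (θ : TwoLayerParams h dx dy) :
    hessianTrace (twoLayerLoss x y) θ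
      = ((secondLayer θ)ᵀ * secondLayer θ).trace * (∑ j, x j ^ 2)
        + dy * (x ⬝ᵥ ((firstLayer θ)ᵀ * firstLayer θ).mulVec x) := by
  rw [hessianTrace, Fintype.sum_sum_type, Fintype.sum_prod_type, Fintype.sum_prod_type,
    trace_transpose_mul_self, dotProduct_transpose_mul_self_mulVec]
  congr 1
  · simp only [iteratedFDeriv_twoLayerLoss_single_inl, mul_pow, Finset.sum_mul, Finset.mul_sum]
    exact Finset.sum_comm
  · simp only [iteratedFDeriv_twoLayerLoss_single_inr, Finset.sum_const, Finset.card_univ,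
      Fintype.card_fin, nsmul_eq_mul, dotProduct, sq]

section SecondMoment

variable {Ω ι : Type*} [MeasurableSpace Ω] {μ : Measure Ω} [Fintype ι] {X : Ω → ι → ℝ}

theorem Matrix.dotProduct_mulVec_self_eq_sum (M : Matrix ι ι ℝ) (x : ι → ℝ) :
    x ⬝ᵥ M *ᵥ x = ∑ i, ∑ j, M i j * (x j * x i) := by
  simp only [dotProduct, mulVec, Finset.mul_sum]
  exact Finset.sum_congr rfl fun i _ => Finset.sum_congr rfl fun j _ => by ring

theorem integrable_dotProduct_mulVec_self (hX : ∀ i j, Integrable (fun ω => X ω i * X ω j) μ)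
    (M : Matrix ι ι ℝ) : Integrable (fun ω => X ω ⬝ᵥ M *ᵥ X ω) μ := by
  simp only [dotProduct_mulVec_self_eq_sum]
  exact integrable_finsetSum _ fun i _ => integrable_finsetSum _ fun j _ =>
    (hX j i).const_mul (M i j)

theorem integral_dotProduct_mulVec_self (hX : ∀ i j, Integrable (fun ω => X ω i * X ω j) μ)
    {S : Matrix ι ι ℝ} (hS : ∀ i j, ∫ ω, X ω i * X ω j ∂μ = S i j) (M : Matrix ι ι ℝ) :
    ∫ ω, X ω ⬝ᵥ M *ᵥ X ω ∂μ = (M * S).trace := by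
  simp only [dotProduct_mulVec_self_eq_sum]
  rw [integral_finsetSum _ fun i _ => integrable_finsetSum _ fun j _ =>
    (hX j i).const_mul (M i j)]
  refine Finset.sum_congr rfl fun i _ => ?_
  rw [integral_finsetSum _ fun j _ => (hX j i).const_mul (M i j)]
  simp only [integral_const_mul, hS, diag, mul_apply]

end SecondMoment

theorem twoLayer_hessian_trace_general {h dx dy : ℕ}
    {Ω : Type*} [MeasurableSpace Ω] (μ : Measure Ω)
    (X : Ω → Fin dx → ℝ) (Y : Ω → Fin dy → ℝ)
    (hXint : ∀ i j, Integrable (fun ω => X ω i * X ω j) μ)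
    (Sx : Matrix (Fin dx) (Fin dx) ℝ)
    (hCov : ∀ i j, ∫ ω, X ω i * X ω j ∂μ = Sx i j) :
    (∀ (x : Fin dx → ℝ) (y : Fin dy → ℝ) (θ : TwoLayerParams h dx dy),
        hessianTrace (twoLayerLoss x y) θ
          = ((secondLayer θ)ᵀ * secondLayer θ).trace * (∑ j, x j ^ 2)
            + dy * (x ⬝ᵥ ((firstLayer θ)ᵀ * firstLayer θ).mulVec x))
    ∧ (∀ θ : TwoLayerParams h dx dy,
        ∫ ω, hessianTrace (twoLayerLoss (X ω) (Y ω)) θ ∂μ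
          = (∑ i, ∑ j, (secondLayer θ i j) ^ 2) * Sx.trace
            + dy * ((firstLayer θ)ᵀ * firstLayer θ * Sx).trace) := by
  refine ⟨hessianTrace_twoLayerLoss, fun θ => ?_⟩
  have hsq : ∀ x : Fin dx → ℝ, ∑ j, x j ^ 2 = x ⬝ᵥ (1 : Matrix (Fin dx) (Fin dx) ℝ) *ᵥ x := by
    simp [dotProduct, sq]
  simp only [hessianTrace_twoLayerLoss, hsq]
  rw [integral_add ((integrable_dotProduct_mulVec_self hXint _).const_mul _)
      ((integrable_dotProduct_mulVec_self hXint _).const_mul _),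
    integral_const_mul, integral_const_mul, integral_dotProduct_mulVec_self hXint hCov,
    integral_dotProduct_mulVec_self hXint hCov, Matrix.one_mul, trace_transpose_mul_self,
    Finset.sum_comm]

/-- For `ℓ(x,y,W₂,W₁) = ½‖y − W₂W₁x‖²`, the trace of the Hessian in all parameters is
`Tr(W₂ᵀW₂)‖x‖² + d_y·xᵀW₁ᵀW₁x`; consequently for a random input `x` with
`E[xxᵀ] = Σ_x`, the expected Hessian trace is `‖W₂‖_F²·TrΣ_x + d_y·Tr(W₁ᵀW₁Σ_x)`. -/
theorem twoLayer_hessian_trace {h dx dy : ℕ}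
    {Ω : Type*} [MeasurableSpace Ω] (μ : Measure Ω) [IsProbabilityMeasure μ]
    (X : Ω → Fin dx → ℝ) (Y : Ω → Fin dy → ℝ)
    (hXmeas : ∀ i, Measurable fun ω => X ω i)
    (hXint : ∀ i j, Integrable (fun ω => X ω i * X ω j) μ)
    (Sx : Matrix (Fin dx) (Fin dx) ℝ)
    (hCov : ∀ i j, ∫ ω, X ω i * X ω j ∂μ = Sx i j) :
    (∀ (x : Fin dx → ℝ) (y : Fin dy → ℝ) (θ : TwoLayerParams h dx dy),
        hessianTrace (twoLayerLoss x y) θ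
          = ((secondLayer θ)ᵀ * secondLayer θ).trace * (∑ j, x j ^ 2)
            + dy * (x ⬝ᵥ ((firstLayer θ)ᵀ * firstLayer θ).mulVec x))
    ∧ (∀ θ : TwoLayerParams h dx dy,
        ∫ ω, hessianTrace (twoLayerLoss (X ω) (Y ω)) θ ∂μ
          = (∑ i, ∑ j, (secondLayer θ i j) ^ 2) * Sx.trace
            + dy * ((firstLayer θ)ᵀ * firstLayer θ * Sx).trace) :=
  twoLayer_hessian_trace_general μ X Y hXint Sx hCov
end

section
/- Fix an integer D ≥ 2, dimensions d_1 = d_x, d_2, …, d_D, d_{D+1} = d_y, a symmetric positive semidefinite Σ ∈ ℝ^{d_x×d_x}, and V ∈ ℝ^{d_y×d_x}. For matrices W_k ∈ ℝ^{d_{k+1}×d_k} (k = 1,…,D), define A_k = W_D⋯W_{k+1} (with A_D = I_{d_y}), B_k = W_{k−1}⋯W_1 (with B_1 = I_{d_x}), and T(W_1,…,W_D) = Σ_{k=1}^D Tr[A_kᵀA_k]·Tr[B_k Σ B_kᵀ]. Then for any W_1,…,W_D satisfying the constraint W_D⋯W_1 = V, one has T(W_1,…,W_D) ≥ D · (‖V·Σ^{1/2}‖_*)^{2(D−1)/D}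 · (d_y · Tr Σ)^{1/D}, where Σ^{1/2} is the positive semidefinite square root of Σ and ‖·‖_* is the nuclear norm (sum of singular values). -/
open Matrix Finset

/-- The product `W_{i+l-1} ⋯ W_i` of a chain of matrices with dimensions `d`. -/
def mulChain (d : ℕ → ℕ) (W : ∀ k, Matrix (Fin (d (k + 1))) (Fin (d k)) ℝ) (i : ℕ) :
    (l : ℕ) → Matrix (Fin (d (i + l))) (Fin (d i)) ℝ
  | 0 => (1 : Matrix (Fin (d i)) (Fin (d i)) ℝ)
  | l + 1 => W (i + l) * mulChain d W i l

/-- The product `W_{l-1} ⋯ W_0` of the first `l` matrices of a chain. -/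
def prodUpTo (d : ℕ → ℕ) (W : ∀ k, Matrix (Fin (d (k + 1))) (Fin (d k)) ℝ) :
    (l : ℕ) → Matrix (Fin (d l)) (Fin (d 0)) ℝ
  | 0 => 1
  | l + 1 => W l * prodUpTo d W l

/-- The sharpness of a `D`-layer deep linear network with input covariance `Sx`:
`T = Σ_{k=1}^D Tr[A_kᵀA_k]·Tr[B_k Sx B_kᵀ]` where `A_k = W_D⋯W_{k+1}` (`A_D = I`)
and `B_k = W_{k−1}⋯W_1` (`B_1 = I`); this is the trace of the Hessian of the
population MSE loss. (Indices are 0-based here: the paper's `W_k` is `W (k-1)`.) -/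
noncomputable def sharpnessT (d : ℕ → ℕ) (W : ∀ k, Matrix (Fin (d (k + 1))) (Fin (d k)) ℝ)
    (Sx : Matrix (Fin (d 0)) (Fin (d 0)) ℝ) (D : ℕ) : ℝ :=
  ∑ k ∈ Finset.range D,
    ((mulChain d W (k + 1) (D - (k + 1)))ᵀ * mulChain d W (k + 1) (D - (k + 1))).trace *
      (prodUpTo d W k * Sx * (prodUpTo d W k)ᵀ).trace

/-- The square root of a positive semidefinite matrix (the definition removed from Mathlib). -/
noncomputable def Matrix.PosSemidef.sqrt {n : Type*} [Fintype n] [DecidableEq n]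
    {A : Matrix n n ℝ} (hA : A.PosSemidef) : Matrix n n ℝ :=
  hA.1.eigenvectorUnitary.1 * diagonal ((↑) ∘ (√·) ∘ hA.1.eigenvalues) *
    (star hA.1.eigenvectorUnitary : Matrix n n ℝ)

/-- The nuclear norm of a real matrix: the sum of its singular values,
i.e. `Tr((MᴴM)^{1/2})`. -/
noncomputable def nuclearNorm {m n : ℕ} (M : Matrix (Fin m) (Fin n) ℝ) : ℝ :=
  ((Matrix.posSemidef_conjTranspose_mul_self M).sqrt).trace

/-!
Write `A_k = W_D ⋯ W_{k+1}`, `B_k = W_{k-1} ⋯ W_1` and `R = Σ^{1/2}`, so that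
`T = ∑ₖ ‖A_k‖_F² ‖B_k R‖_F²`. Since `A_k B_{k+1} R = V R` for every `k < D`, the bound
`‖X Y‖_* ≤ ‖X‖_F ‖Y‖_F` gives `‖V R‖_*² ≤ ‖A_k‖_F² ‖B_{k+1} R‖_F²`. Pairing each `A_k` with
`B_{k+1}` leaves `‖A_D‖_F² ‖B_1 R‖_F² = d_y Tr Σ` over, so the product of the `D` summands of
`T` is at least `‖V R‖_*^{2(D-1)} d_y Tr Σ`, and AM-GM concludes.
-/

open scoped MatrixOrder

theorem Finset.prod_range_succ_mul_shift {M : Type*} [CommMonoid M] (a b : ℕ → M) (n : ℕ) :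
    ∏ k ∈ range (n + 1), a k * b k = a n * b 0 * ∏ k ∈ range n, a k * b (k + 1) := by
  simp only [prod_mul_distrib, prod_range_succ a, prod_range_succ' b]
  ac_rfl

theorem Real.card_mul_prod_rpow_le_sum {ι : Type*} (s : Finset ι) {z : ι → ℝ}
    (hz : ∀ i ∈ s, 0 ≤ z i) :
    (#s : ℝ) * (∏ i ∈ s, z i) ^ ((1 : ℝ) / #s) ≤ ∑ i ∈ s, z i := by
  rcases s.eq_empty_or_nonempty with rfl | hs
  · simp
  have hcard : (0 : ℝ) < #s := by exact_mod_cast hs.card_pos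
  have := Real.geom_mean_le_arith_mean s (fun _ => 1) z (fun _ _ => zero_le_one) (by simpa) hz
  simp only [Real.rpow_one, sum_const, nsmul_eq_mul, mul_one, one_mul] at this
  rw [one_div, ← le_div_iff₀' hcard]
  exact this

namespace Matrix

variable {m n p : Type*} [Fintype m] [Fintype n] [Fintype p]

theorem trace_transpose_mul_sq_le (A B : Matrix m n ℝ) :
    (Aᵀ * B).trace ^ 2 ≤ (Aᵀ * A).trace * (Bᵀ * B).trace := by
  have h (A B : Matrix m n ℝ) : (Aᵀ * B).trace = ∑ ij : m × n, A ij.1 ij.2 * B ij.1 ij.2 := by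
    simp only [trace, diag_apply, mul_apply, transpose_apply, Fintype.sum_prod_type]
    exact Finset.sum_comm
  simpa only [h, sq] using Finset.sum_mul_sq_le_sq_mul_sq univ _ _

theorem trace_transpose_mul_self_nonneg (A : Matrix m n ℝ) : 0 ≤ (Aᵀ * A).trace := by
  simpa only [conjTranspose_eq_transpose_of_trivial] using
    (posSemidef_conjTranspose_mul_self A).trace_nonneg

theorem trace_mul_mul_transpose_le_of_le_one [DecidableEq n] {P : Matrix n n ℝ} (hP : P ≤ 1)
    (Y : Matrix m n ℝ) : (Y * P * Yᵀ).trace ≤ (Y * Yᵀ).trace := by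
  have := ((le_iff.mp hP).mul_mul_conjTranspose_same Y).trace_nonneg
  rw [conjTranspose_eq_transpose_of_trivial, Matrix.mul_sub, Matrix.sub_mul, trace_sub,
    Matrix.mul_one] at this
  linarith

variable [DecidableEq p]

theorem transpose_cfc (f : ℝ → ℝ) (A : Matrix p p ℝ) : (cfc f A)ᵀ = cfc f A := by
  rw [← conjTranspose_eq_transpose_of_trivial]
  exact cfc_predicate (p := IsSelfAdjoint) f A

theorem trace_cfc_sqrt_mul_sq_le (X : Matrix m n ℝ) (Y : Matrix n p ℝ) :
    (cfc Real.sqrt ((X * Y)ᵀ * (X * Y))).trace ^ 2 ≤ (Xᵀ * X).trace * (Yᵀ * Y).trace := by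
  set A := (X * Y)ᵀ * (X * Y) with hA
  have hsa : IsSelfAdjoint A := by
    simpa only [conjTranspose_eq_transpose_of_trivial] using
      (isHermitian_conjTranspose_mul_self (X * Y)).isSelfAdjoint
  have hcont (f : ℝ → ℝ) : ContinuousOn f (spectrum ℝ A) :=
    A.finite_real_spectrum.continuousOn f
  -- `Sinv` is the pseudo-inverse of `√A` (as `0⁻¹ = 0`), so `Q = X Y Sinv` is a partial
  -- isometry: `QᵀQ = P` is the projection onto the range of `A`.
  set Sinv := cfc (fun x => (√x)⁻¹) A
  set P := cfc (fun x => √x * (√x)⁻¹) A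
  have hSinv : Sinvᵀ = Sinv := transpose_cfc _ _
  set Q := X * Y * Sinv
  have hQQ : Qᵀ * Q = P := calc
    Qᵀ * Q = Sinv * A * Sinv := by simp only [Q, hA, transpose_mul, hSinv, Matrix.mul_assoc]
    _ = cfc (fun x => (√x)⁻¹ * x * (√x)⁻¹) A := by
      rw [cfc_mul _ _ A (hcont _) (hcont _), cfc_mul _ _ A (hcont _) (hcont _), cfc_id' ℝ A hsa]
    _ = P := cfc_congr fun x _ => by rw [inv_mul_eq_div, Real.div_sqrt]
  have htrace : (cfc Real.sqrt A).trace = (Xᵀ * (Q * Yᵀ)).trace := calc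
    (cfc Real.sqrt A).trace = (A * Sinv).trace := by
      rw [← cfc_id' ℝ A, ← cfc_mul _ _ _ (hcont _) (hcont _), cfc_id' ℝ A hsa]
      simp only [← div_eq_mul_inv, Real.div_sqrt]
    _ = (Yᵀ * (Xᵀ * Q)).trace := by simp only [Q, hA, transpose_mul, Matrix.mul_assoc]
    _ = (Xᵀ * (Q * Yᵀ)).trace := by rw [trace_mul_comm, Matrix.mul_assoc]
  have hP : P ≤ 1 := cfc_le_one _ _ fun x _ => mul_inv_le_one
  calc (cfc Real.sqrt A).trace ^ 2 = (Xᵀ * (Q * Yᵀ)).trace ^ 2 := by rw [htrace]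
    _ ≤ (Xᵀ * X).trace * ((Q * Yᵀ)ᵀ * (Q * Yᵀ)).trace := trace_transpose_mul_sq_le _ _
    _ = (Xᵀ * X).trace * (Y * P * Yᵀ).trace := by
      rw [← hQQ, transpose_mul, transpose_transpose]
      simp only [Matrix.mul_assoc]
    _ ≤ (Xᵀ * X).trace * (Yᵀ * Y).trace := by
      rw [trace_mul_comm Yᵀ]
      exact mul_le_mul_of_nonneg_left (trace_mul_mul_transpose_le_of_le_one hP Y)
        (trace_transpose_mul_self_nonneg X)

namespace PosSemidef

variable {A : Matrix p p ℝ} (hA : A.PosSemidef)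

theorem sqrt_eq_cfc : hA.sqrt = cfc Real.sqrt A := by
  rw [hA.1.cfc_eq]
  rfl

theorem sqrt_mul_sqrt : hA.sqrt * hA.sqrt = A := by
  rw [hA.sqrt_eq_cfc, ← cfc_mul _ _ A]
  conv_rhs => rw [← cfc_id' ℝ A]
  exact cfc_congr fun x hx =>
    Real.mul_self_sqrt ((posSemidef_iff_isHermitian_and_spectrum_nonneg.mp hA).2 hx)

theorem transpose_sqrt : hA.sqrtᵀ = hA.sqrt := by
  rw [hA.sqrt_eq_cfc, transpose_cfc]

theorem trace_mul_mul_transpose {q : Type*} [Fintype q] (B : Matrix q p ℝ) :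
    (B * A * Bᵀ).trace = ((B * hA.sqrt)ᵀ * (B * hA.sqrt)).trace := by
  rw [trace_mul_comm (B * hA.sqrt)ᵀ, transpose_mul, hA.transpose_sqrt, ← Matrix.mul_assoc,
    Matrix.mul_assoc B hA.sqrt, hA.sqrt_mul_sqrt]

end PosSemidef

end Matrix

theorem nuclearNorm_eq_trace_cfc {m n : ℕ} (M : Matrix (Fin m) (Fin n) ℝ) :
    nuclearNorm M = (cfc Real.sqrt (Mᵀ * M)).trace := by
  rw [nuclearNorm, PosSemidef.sqrt_eq_cfc, conjTranspose_eq_transpose_of_trivial]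

theorem nuclearNorm_nonneg {m n : ℕ} (M : Matrix (Fin m) (Fin n) ℝ) : 0 ≤ nuclearNorm M := by
  rw [nuclearNorm_eq_trace_cfc]
  exact (nonneg_iff_posSemidef.mp (cfc_nonneg fun x _ => Real.sqrt_nonneg x)).trace_nonneg

theorem nuclearNorm_mul_sq_le {m n p : ℕ} (X : Matrix (Fin m) (Fin n) ℝ)
    (Y : Matrix (Fin n) (Fin p) ℝ) :
    nuclearNorm (X * Y) ^ 2 ≤ (Xᵀ * X).trace * (Yᵀ * Y).trace := by
  rw [nuclearNorm_eq_trace_cfc]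
  exact trace_cfc_sqrt_mul_sq_le X Y

section Chain

variable (d : ℕ → ℕ) (W : ∀ k, Matrix (Fin (d (k + 1))) (Fin (d k)) ℝ)

/-- `Tr[A_kᵀ A_k]` in the notation of `sharpnessT`. -/
noncomputable def outerTrace (D k : ℕ) : ℝ :=
  ((mulChain d W (k + 1) (D - (k + 1)))ᵀ * mulChain d W (k + 1) (D - (k + 1))).trace

/-- `Tr[B_k Σ B_kᵀ]` in the notation of `sharpnessT`. -/
noncomputable def innerTrace (Sx : Matrix (Fin (d 0)) (Fin (d 0)) ℝ) (k : ℕ) : ℝ :=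
  (prodUpTo d W k * Sx * (prodUpTo d W k)ᵀ).trace

theorem sharpnessT_eq_sum (Sx : Matrix (Fin (d 0)) (Fin (d 0)) ℝ) (D : ℕ) :
    sharpnessT d W Sx D = ∑ k ∈ range D, outerTrace d W D k * innerTrace d W Sx k :=
  rfl

theorem prodUpTo_add (j l : ℕ) : prodUpTo d W (j + l) = mulChain d W j l * prodUpTo d W j := by
  induction l with
  | zero => simp [mulChain]
  | succ l ih =>
    change W (j + l) * prodUpTo d W (j + l) = W (j + l) * mulChain d W j l * prodUpTo d W j
    rw [ih, Matrix.mul_assoc]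

theorem outerTrace_nonneg (D k : ℕ) : 0 ≤ outerTrace d W D k :=
  trace_transpose_mul_self_nonneg _

theorem outerTrace_last (n : ℕ) : outerTrace d W (n + 1) n = d (n + 1) := by
  rw [outerTrace, Nat.sub_self]
  simp [mulChain]

variable {Sx : Matrix (Fin (d 0)) (Fin (d 0)) ℝ}

theorem innerTrace_zero : innerTrace d W Sx 0 = Sx.trace := by
  simp [innerTrace, prodUpTo]

theorem innerTrace_eq (hSx : Sx.PosSemidef) (k : ℕ) :
    innerTrace d W Sx k = ((prodUpTo d W k * hSx.sqrt)ᵀ * (prodUpTo d W k * hSx.sqrt)).trace :=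
  hSx.trace_mul_mul_transpose _

theorem innerTrace_nonneg (hSx : Sx.PosSemidef) (k : ℕ) : 0 ≤ innerTrace d W Sx k := by
  rw [innerTrace_eq d W hSx]
  exact trace_transpose_mul_self_nonneg _

theorem nuclearNorm_sq_le_outerTrace_mul_innerTrace (hSx : Sx.PosSemidef) {D k : ℕ}
    (hk : k + 1 ≤ D) :
    nuclearNorm (prodUpTo d W D * hSx.sqrt) ^ 2 ≤
      outerTrace d W D k * innerTrace d W Sx (k + 1) := by
  obtain ⟨l, rfl⟩ := Nat.exists_eq_add_of_le hk
  rw [innerTrace_eq d W hSx, outerTrace, Nat.add_sub_cancel_left, prodUpTo_add,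
    Matrix.mul_assoc]
  exact nuclearNorm_mul_sq_le _ _

theorem pow_mul_le_prod_outerTrace_mul_innerTrace (hSx : Sx.PosSemidef) (n : ℕ) :
    nuclearNorm (prodUpTo d W (n + 1) * hSx.sqrt) ^ (2 * n) * ((d (n + 1) : ℝ) * Sx.trace) ≤
      ∏ k ∈ range (n + 1), outerTrace d W (n + 1) k * innerTrace d W Sx k := by
  rw [prod_range_succ_mul_shift, outerTrace_last, innerTrace_zero, mul_comm, pow_mul,
    pow_eq_prod_const]
  gcongr with k hk
  · exact mul_nonneg (Nat.cast_nonneg _) hSx.trace_nonneg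
  · exact nuclearNorm_sq_le_outerTrace_mul_innerTrace d W hSx (by rw [mem_range] at hk; omega)

end Chain

theorem sharpness_lower_bound_general (D : ℕ) (d : ℕ → ℕ)
    (Sx : Matrix (Fin (d 0)) (Fin (d 0)) ℝ) (hSx : Sx.PosSemidef)
    (V : Matrix (Fin (d D)) (Fin (d 0)) ℝ)
    (W : ∀ k, Matrix (Fin (d (k + 1))) (Fin (d k)) ℝ)
    (hW : prodUpTo d W D = V) :
    (D : ℝ) * nuclearNorm (V * hSx.sqrt) ^ (2 * ((D : ℝ) - 1) / D)
        * ((d D : ℝ) * Sx.trace) ^ ((1 : ℝ) / D)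
      ≤ sharpnessT d W Sx D := by
  subst hW
  rcases D with _ | n
  · simp [sharpnessT]
  set N := nuclearNorm (prodUpTo d W (n + 1) * hSx.sqrt)
  have hN : 0 ≤ N := nuclearNorm_nonneg _
  have hc : 0 ≤ (d (n + 1) : ℝ) * Sx.trace := mul_nonneg (Nat.cast_nonneg _) hSx.trace_nonneg
  calc ((n + 1 : ℕ) : ℝ) * N ^ (2 * (((n + 1 : ℕ) : ℝ) - 1) / (n + 1 : ℕ))
          * ((d (n + 1) : ℝ) * Sx.trace) ^ ((1 : ℝ) / (n + 1 : ℕ))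
      = (n + 1 : ℕ) * (N ^ (2 * n) * ((d (n + 1) : ℝ) * Sx.trace)) ^ ((1 : ℝ) / (n + 1 : ℕ)) := by
        rw [Real.mul_rpow (by positivity) hc, ← Real.rpow_natCast, ← Real.rpow_mul hN]
        push_cast
        ring_nf
    _ ≤ (n + 1 : ℕ) * (∏ k ∈ range (n + 1), outerTrace d W (n + 1) k * innerTrace d W Sx k)
          ^ ((1 : ℝ) / (n + 1 : ℕ)) := by
        gcongr
        exact pow_mul_le_prod_outerTrace_mul_innerTrace d W hSx n
    _ ≤ sharpnessT d W Sx (n + 1) := by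
        simpa [sharpnessT_eq_sum] using Real.card_mul_prod_rpow_le_sum (range (n + 1))
          fun k _ => mul_nonneg (outerTrace_nonneg d W _ k) (innerTrace_nonneg d W hSx k)

/-- Lower bound on the sharpness of a deep linear network at an interpolating solution:
if `W_D ⋯ W_1 = V` then
`T(W_1,…,W_D) ≥ D · ‖V Σ^{1/2}‖_*^{2(D−1)/D} · (d_y · Tr Σ)^{1/D}`. -/
theorem sharpness_lower_bound (D : ℕ) (hD : 2 ≤ D) (d : ℕ → ℕ)
    (Sx : Matrix (Fin (d 0)) (Fin (d 0)) ℝ) (hSx : Sx.PosSemidef)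
    (V : Matrix (Fin (d D)) (Fin (d 0)) ℝ)
    (W : ∀ k, Matrix (Fin (d (k + 1))) (Fin (d k)) ℝ)
    (hW : prodUpTo d W D = V) :
    (D : ℝ) * nuclearNorm (V * hSx.sqrt) ^ (2 * ((D : ℝ) - 1) / D)
        * ((d D : ℝ) * Sx.trace) ^ ((1 : ℝ) / D)
      ≤ sharpnessT d W Sx D :=
  sharpness_lower_bound_general D d Sx hSx V W hW
end

section
/- Fix an integer D ≥ 2 and define, for σ > 0, g(σ) = (D−1)·2^{1/D}·(1+σ)^{(D−2)/D}·(1+σ²)^{1/D}·(1 + 1/σ) + 2^{(D+1)/D}·(1+σ)^{2(D−1)/D}·(1+σ²)^{−(D−1)/D}. Then (i) g(σ) = g(1/σ) for all σ > 0, and (ii) g has a unique global minimum at σ = 1, i.e. g(σ) > g(1) for all σ > 0 with σ ≠ 1. -/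
/-!
Substituting `u = σ + σ⁻¹` turns the sharpness into
`h(u) = (2u)^{1/D} (u + 2)^{(D-1)/D} (D - 1 + 2/u)`, which is manifestly invariant under
`σ ↦ σ⁻¹`. Writing `h(u) = (D - 1) X + X · (2/u)` with `X = (2u)^{1/D} (u + 2)^{(D-1)/D}`, the
weighted AM-GM inequality with weights `(D-1)/D` and `1/D` gives `h(u) ≥ D · 4^{1/D} (u + 2)^{(D-1)/D}`,
which exceeds `4D = h(2)` as soon as `u > 2`, i.e. as soon as `σ ≠ 1`.
-/

open Real

noncomputable section

namespace DeepLinearSharpness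

def sharpness (D σ : ℝ) : ℝ :=
  (D - 1) * (2 : ℝ) ^ (1 / D) * (1 + σ) ^ ((D - 2) / D) * (1 + σ ^ 2) ^ (1 / D) * (1 + 1 / σ)
    + (2 : ℝ) ^ ((D + 1) / D) * (1 + σ) ^ (2 * (D - 1) / D) * (1 + σ ^ 2) ^ (-(D - 1) / D)

def sharpnessProfile (D u : ℝ) : ℝ :=
  (2 * u) ^ (1 / D) * (u + 2) ^ ((D - 1) / D) * (D - 1 + 2 / u)

lemma two_lt_add_inv {σ : ℝ} (hσ : 0 < σ) (h : σ ≠ 1) : 2 < σ + σ⁻¹ := by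
  have hsq : 0 < (σ - 1) ^ 2 := sq_pos_iff.mpr (sub_ne_zero.mpr h)
  rw [← sub_pos, show σ + σ⁻¹ - 2 = (σ - 1) ^ 2 / σ by field_simp; ring]
  positivity

lemma rpow_one_div_mul_rpow_sub_one_div {x : ℝ} (hx : 0 < x) {D : ℝ} (hD : D ≠ 0) :
    x ^ (1 / D) * x ^ ((D - 1) / D) = x := by
  rw [← rpow_add hx, show 1 / D + (D - 1) / D = 1 by field_simp; ring, rpow_one]

lemma div_rpow_mul_div_rpow_of_add_eq_one {x y σ p q : ℝ} (hx : 0 ≤ x) (hy : 0 ≤ y)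
    (hσ : 0 < σ) (hpq : p + q = 1) : (x / σ) ^ p * (y / σ) ^ q = x ^ p * y ^ q / σ := by
  rw [div_rpow hx hσ.le, div_rpow hy hσ.le, div_mul_div_comm, ← rpow_add hσ, hpq, rpow_one]

theorem sharpness_eq_sharpnessProfile {D σ : ℝ} (hD : D ≠ 0) (hσ : 0 < σ) :
    sharpness D σ = sharpnessProfile D (σ + σ⁻¹) := by
  set a := 1 + σ
  set b := 1 + σ ^ 2
  have ha : 0 < a := by positivity
  have hb : 0 < b := by positivity
  -- both factors of the profile are `(·/σ)`-powers whose exponents add up to `1`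
  have hX : (2 * (σ + σ⁻¹)) ^ (1 / D) * (σ + σ⁻¹ + 2) ^ ((D - 1) / D)
      = 2 ^ (1 / D) * b ^ (1 / D) * (a ^ ((D - 2) / D) * a) / σ := by
    rw [show 2 * (σ + σ⁻¹) = 2 * b / σ by field_simp; ring,
      show σ + σ⁻¹ + 2 = a ^ 2 / σ by field_simp; ring,
      div_rpow_mul_div_rpow_of_add_eq_one (by positivity) (by positivity) hσ
        (by field_simp; ring),
      mul_rpow zero_le_two hb.le, ← rpow_natCast_mul ha.le, ← rpow_add_one ha.ne']
    congr 3
    field_simp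
    push_cast
    ring
  have h2 : (2 : ℝ) ^ ((D + 1) / D) = 2 ^ (1 / D) * 2 := by
    rw [← rpow_add_one two_ne_zero]; congr 1; field_simp; ring
  have hb' : b ^ (-(D - 1) / D) = b ^ (1 / D) / b := by
    rw [← rpow_sub_one hb.ne']; congr 1; field_simp; ring
  have ha' : a ^ (2 * (D - 1) / D) = a ^ ((D - 2) / D) * a := by
    rw [← rpow_add_one ha.ne']; congr 1; field_simp; ring
  rw [sharpness, sharpnessProfile, hX, h2, hb', ha',
    show 2 / (σ + σ⁻¹) = 2 * σ / b by field_simp; ring]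
  field_simp
  ring

theorem sharpness_inv {D σ : ℝ} (hD : D ≠ 0) (hσ : 0 < σ) :
    sharpness D σ⁻¹ = sharpness D σ := by
  rw [sharpness_eq_sharpnessProfile hD hσ, sharpness_eq_sharpnessProfile hD (inv_pos.mpr hσ),
    inv_inv, add_comm]

theorem sharpnessProfile_two {D : ℝ} (hD : D ≠ 0) : sharpnessProfile D 2 = 4 * D := by
  rw [sharpnessProfile, show (2 : ℝ) * 2 = 4 by norm_num, show (2 : ℝ) + 2 = 4 by norm_num,
    rpow_one_div_mul_rpow_sub_one_div four_pos hD]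
  ring

theorem mul_rpow_le_sharpnessProfile {D u : ℝ} (hD : 1 < D) (hu : 0 < u) :
    D * (4 ^ (1 / D) * (u + 2) ^ ((D - 1) / D)) ≤ sharpnessProfile D u := by
  have hD0 : D ≠ 0 := by positivity
  set X := (2 * u) ^ (1 / D) * (u + 2) ^ ((D - 1) / D)
  have hX : 0 < X := by positivity
  have amgm := geom_mean_le_arith_mean2_weighted (p₁ := X) (p₂ := X * (2 / u))
    (div_nonneg (by linarith) (by linarith)) (by positivity) hX.le (by positivity)
    (by field_simp; ring : (D - 1) / D + 1 / D = 1)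
  have hgeom : X ^ ((D - 1) / D) * (X * (2 / u)) ^ (1 / D)
      = 4 ^ (1 / D) * (u + 2) ^ ((D - 1) / D) :=
    calc X ^ ((D - 1) / D) * (X * (2 / u)) ^ (1 / D)
        = X ^ (1 / D) * X ^ ((D - 1) / D) * (2 / u) ^ (1 / D) := by
          rw [mul_rpow hX.le (by positivity)]; ring
      _ = (2 * u * (2 / u)) ^ (1 / D) * (u + 2) ^ ((D - 1) / D) := by
          rw [rpow_one_div_mul_rpow_sub_one_div hX hD0, mul_rpow (by positivity) (by positivity)]
          ring
      _ = 4 ^ (1 / D) * (u + 2) ^ ((D - 1) / D) := by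
          rw [show 2 * u * (2 / u) = 4 by field_simp; ring]
  calc D * (4 ^ (1 / D) * (u + 2) ^ ((D - 1) / D))
      ≤ D * ((D - 1) / D * X + 1 / D * (X * (2 / u))) := by
        rw [← hgeom]; gcongr
    _ = sharpnessProfile D u := by
        simp only [sharpnessProfile, X]; field_simp

theorem sharpnessProfile_two_lt {D u : ℝ} (hD : 1 < D) (hu : 2 < u) :
    sharpnessProfile D 2 < sharpnessProfile D u := by
  have hD0 : D ≠ 0 := by positivity
  calc sharpnessProfile D 2 = D * (4 ^ (1 / D) * 4 ^ ((D - 1) / D)) := by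
        rw [sharpnessProfile_two hD0, rpow_one_div_mul_rpow_sub_one_div four_pos hD0, mul_comm]
    _ < D * (4 ^ (1 / D) * (u + 2) ^ ((D - 1) / D)) := by
        gcongr
        linarith
    _ ≤ sharpnessProfile D u := mul_rpow_le_sharpnessProfile hD (by linarith)

end DeepLinearSharpness

end

open DeepLinearSharpness in
/-- For `D ≥ 2` and `σ > 0`, the sharpness
`g(σ) = (D−1)·2^{1/D}·(1+σ)^{(D−2)/D}·(1+σ²)^{1/D}·(1 + 1/σ)
      + 2^{(D+1)/D}·(1+σ)^{2(D−1)/D}·(1+σ²)^{−(D−1)/D}`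
satisfies (i) `g(σ) = g(1/σ)` and (ii) `g` has a unique global minimum at `σ = 1`:
`g(1) < g(σ)` for all `σ > 0` with `σ ≠ 1`. -/
theorem sharpness_sigma_symmetric_min (D : ℕ) (hD : 2 ≤ D) :
    let g : ℝ → ℝ := fun σ =>
      ((D : ℝ) - 1) * (2 : ℝ) ^ ((1 : ℝ) / D) * (1 + σ) ^ (((D : ℝ) - 2) / D)
          * (1 + σ ^ 2) ^ ((1 : ℝ) / D) * (1 + 1 / σ)
        + (2 : ℝ) ^ (((D : ℝ) + 1) / D) * (1 + σ) ^ (2 * ((D : ℝ) - 1) / D)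
          * (1 + σ ^ 2) ^ (-((D : ℝ) - 1) / D)
    (∀ σ : ℝ, 0 < σ → g σ = g (1 / σ)) ∧
      (∀ σ : ℝ, 0 < σ → σ ≠ 1 → g 1 < g σ) := by
  intro g
  have hD1 : (1 : ℝ) < D := by exact_mod_cast hD
  have hD0 : (D : ℝ) ≠ 0 := by positivity
  refine ⟨fun σ hσ => ?_, fun σ hσ hσ1 => ?_⟩
  · change sharpness D σ = sharpness D (1 / σ)
    rw [one_div, sharpness_inv hD0 hσ]
  · change sharpness D 1 < sharpness D σ
    rw [sharpness_eq_sharpnessProfile hD0 hσ, sharpness_eq_sharpnessProfile hD0 one_pos,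
      inv_one, show (1 : ℝ) + 1 = 2 by norm_num]
    exact sharpnessProfile_two_lt hD1 (two_lt_add_inv hσ hσ1)
end

section
/- Consider a D-layer linear network with weight matrices W_k ∈ ℝ^{d_{k+1}×d_k} (k = 1,…,D, with d_1 = d_x, d_{D+1} = d_y), where the entries of all W_k are jointly independent and the entries of W_k are i.i.d. centered Gaussians of variance σ_k². Let Σ_x ∈ ℝ^{d_x×d_x} be symmetric positive semidefinite, and define the sharpness T(W_1,…,W_D) = Σ_{k=1}^D Tr[A_kᵀA_k]·Tr[B_k Σ_x B_kᵀ] with A_k = W_D⋯W_{k+1} (A_D = I), B_k = W_{k−1}⋯W_1 (B_1 = I). Then E[T] = d_y · (∏_{k=2}^D d_k) · Tr(Σ_x) · Σ_{k=1}^D ∏_{j≠k, 1≤j≤D} σ_j². In particular, if σ_k² = σ² and d_k = d for all intermediate dimensions, then E[T] = D · d_y · Tr(Σ_x) · (dσ²)^{D−1}. -/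
open Matrix MeasureTheory ProbabilityTheory Finset

open scoped NNReal ENNReal

/-!
If the entries of a random matrix `W` are centred with `E[W_ab W_ac] = s δ_bc` and `W` is
independent of a random square matrix `M`, then `E tr(W M Wᵀ) = (#rows W) · s · E tr M`.
Peeling off one layer at a time gives `E tr(B_k Σ_x B_kᵀ) = tr Σ_x ∏_{j<k} d_{j+1} σ_j²`, and,
since `tr(A_kᵀ A_k) = tr(A_k I A_kᵀ)` with `A_k` the prefix product of the shifted chain
`W_{k+1}, W_{k+2}, …`, also `E tr(A_kᵀ A_k) = d_{k+1} ∏_{j>k} d_{j+1} σ_j²`. The factors `A_k` and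
`B_k` are built from disjoint sets of layers, hence independent, so the expectation of each
summand of `T` is the product of these two expectations.
-/

section GaussianMoments

variable {Ω : Type*} [MeasurableSpace Ω] {μ : Measure Ω} {X : Ω → ℝ} {m : ℝ} {v : ℝ≥0}

lemma memLp_of_map_eq_gaussianReal (hX : AEMeasurable X μ) (h : μ.map X = gaussianReal m v)
    {p : ℝ≥0∞} (hp : p ≠ ∞) : MemLp X p μ :=
  (memLp_map_measure_iff aestronglyMeasurable_id hX).1 (h ▸ memLp_id_gaussianReal' p hp)

lemma integral_of_map_eq_gaussianReal (hX : AEMeasurable X μ) (h : μ.map X = gaussianReal m v) :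
    ∫ ω, X ω ∂μ = m := by
  have := integral_map (f := fun x : ℝ => x) hX aestronglyMeasurable_id
  rwa [h, integral_id_gaussianReal, eq_comm] at this

lemma integral_sq_of_map_eq_gaussianReal [IsProbabilityMeasure μ] (hX : AEMeasurable X μ)
    (h : μ.map X = gaussianReal m v) : ∫ ω, X ω ^ 2 ∂μ = v + m ^ 2 := by
  have hvar : Var[X; μ] = v := by
    rw [← Function.id_comp X, ← variance_map aemeasurable_id hX, h, variance_id_gaussianReal]
  rw [variance_eq_sub (memLp_of_map_eq_gaussianReal hX h ENNReal.ofNat_ne_top),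
    integral_of_map_eq_gaussianReal hX h] at hvar
  simp only [Pi.pow_apply] at hvar
  linarith

end GaussianMoments

theorem ProbabilityTheory.Indep.indepFun {Ω β γ : Type*} {mΩ : MeasurableSpace Ω}
    [MeasurableSpace β] [MeasurableSpace γ] {μ : Measure Ω} {m₁ m₂ : MeasurableSpace Ω}
    {f : Ω → β} {g : Ω → γ} (h : Indep m₁ m₂ μ) (hf : Measurable[m₁] f)
    (hg : Measurable[m₂] g) : IndepFun f g μ :=
  (IndepFun_iff_Indep f g μ).2 (indep_of_indep_of_le h hf.comap_le hg.comap_le)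

namespace Matrix

variable {Ω : Type*} {mΩ : MeasurableSpace Ω} {μ : Measure Ω} {l n p : Type*}

lemma mul_mul_transpose_apply {R : Type*} [Fintype n] [CommSemiring R]
    (W : Matrix l n R) (M : Matrix n n R) (i k : l) :
    (W * M * Wᵀ) i k = ∑ b, ∑ c, W i b * W k c * M b c := by
  simp only [mul_apply, transpose_apply, Finset.sum_mul]
  rw [Finset.sum_comm]
  exact Finset.sum_congr rfl fun _ _ => Finset.sum_congr rfl fun _ _ => by ring

lemma measurable_mul_apply [Fintype n] {m : MeasurableSpace Ω} {A : Ω → Matrix l n ℝ}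
    {B : Ω → Matrix n p ℝ} (hA : ∀ i j, Measurable[m] fun ω => A ω i j)
    (hB : ∀ i j, Measurable[m] fun ω => B ω i j) (i : l) (k : p) :
    Measurable[m] fun ω => (A ω * B ω) i k := by
  simp only [mul_apply]
  exact Finset.measurable_sum _ fun j _ => (hA i j).mul (hB j k)

lemma measurable_trace [Fintype n] {m : MeasurableSpace Ω} {A : Ω → Matrix n n ℝ}
    (hA : ∀ i j, Measurable[m] fun ω => A ω i j) : Measurable[m] fun ω => (A ω).trace :=
  Finset.measurable_sum _ fun i _ => hA i i

lemma integrable_trace [Fintype n] {A : Ω → Matrix n n ℝ}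
    (hA : ∀ i j, Integrable (fun ω => A ω i j) μ) : Integrable (fun ω => (A ω).trace) μ :=
  integrable_finsetSum _ fun i _ => hA i i

variable {mW mM : MeasurableSpace Ω} {W : Ω → Matrix l n ℝ} {M : Ω → Matrix n n ℝ}

lemma integrable_entry_mul_entry_mul_entry (hind : Indep mW mM μ)
    (hW : ∀ i j, Measurable[mW] fun ω => W ω i j)
    (hM : ∀ i j, Measurable[mM] fun ω => M ω i j) (hW2 : ∀ i j, MemLp (fun ω => W ω i j) 2 μ)
    (hMint : ∀ i j, Integrable (fun ω => M ω i j) μ)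
    (i k : l) (b c : n) :
    Integrable (fun ω => W ω i b * W ω k c * M ω b c) μ :=
  (hind.indepFun ((hW i b).mul (hW k c)) (hM b c)).integrable_mul
    ((hW2 i b).integrable_mul (hW2 k c)) (hMint b c)

lemma integrable_mul_mul_transpose_apply [Fintype n] (hind : Indep mW mM μ)
    (hW : ∀ i j, Measurable[mW] fun ω => W ω i j)
    (hM : ∀ i j, Measurable[mM] fun ω => M ω i j) (hW2 : ∀ i j, MemLp (fun ω => W ω i j) 2 μ)
    (hMint : ∀ i j, Integrable (fun ω => M ω i j) μ)
    (i k : l) : Integrable (fun ω => (W ω * M ω * (W ω)ᵀ) i k) μ := by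
  simp only [mul_mul_transpose_apply]
  exact integrable_finsetSum _ fun b _ => integrable_finsetSum _ fun c _ =>
    integrable_entry_mul_entry_mul_entry hind hW hM hW2 hMint i k b c

lemma integral_trace_mul_mul_transpose [Fintype l] [Fintype n] [DecidableEq n] (hmW : mW ≤ mΩ)
    (hind : Indep mW mM μ)
    (hW : ∀ i j, Measurable[mW] fun ω => W ω i j)
    (hM : ∀ i j, Measurable[mM] fun ω => M ω i j) (hW2 : ∀ i j, MemLp (fun ω => W ω i j) 2 μ)
    (hMint : ∀ i j, Integrable (fun ω => M ω i j) μ)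
    {s : ℝ} (hcov : ∀ i b c, ∫ ω, W ω i b * W ω i c ∂μ = if b = c then s else 0) :
    ∫ ω, (W ω * M ω * (W ω)ᵀ).trace ∂μ = Fintype.card l * s * ∫ ω, (M ω).trace ∂μ := by
  have hterm : ∀ i b c, ∫ ω, W ω i b * W ω i c * M ω b c ∂μ
      = (if b = c then s else 0) * ∫ ω, M ω b c ∂μ := fun i b c => by
    rw [← hcov]
    exact (hind.indepFun ((hW i b).mul (hW i c)) (hM b c)).integral_mul_eq_mul_integral
      (((hW i b).mul (hW i c)).mono hmW le_rfl).aestronglyMeasurable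
      (hMint b c).aestronglyMeasurable
  have hint := integrable_entry_mul_entry_mul_entry hind hW hM hW2 hMint
  simp only [trace, diag, mul_mul_transpose_apply]
  rw [integral_finsetSum _ fun i _ => integrable_finsetSum _ fun b _ =>
      integrable_finsetSum _ fun c _ => hint i i b c,
    integral_finsetSum _ fun i _ => hMint i i]
  simp_rw [integral_finsetSum _ fun b _ => integrable_finsetSum _ fun c _ => hint _ _ b c,
    integral_finsetSum _ fun c _ => hint _ _ _ c, hterm, ite_mul, zero_mul,
    Finset.sum_ite_eq, Finset.mem_univ, if_true]
  rw [Finset.sum_const, Finset.card_univ, nsmul_eq_mul, ← Finset.mul_sum, mul_assoc]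

end Matrix

namespace Finset

variable {M : Type*} [CommMonoid M] (f : ℕ → M) {k D : ℕ}

lemma prod_range_erase_eq_mul (hk : k < D) :
    ∏ j ∈ (range D).erase k, f j
      = (∏ j ∈ range k, f j) * ∏ j ∈ range (D - (k + 1)), f (k + 1 + j) := by
  have hsplit : (range D).erase k = range k ∪ Ico (k + 1) D := by
    ext j
    simp only [mem_erase, mem_range, mem_union, mem_Ico]
    omega
  rw [hsplit, prod_union (disjoint_left.2 fun j hj hj' => by simp at hj hj'; omega),
    prod_Ico_eq_prod_range]

lemma prod_range_eq_mul_mul (hk : k < D) :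
    ∏ j ∈ range D, f j
      = (∏ j ∈ range k, f j) * f k * ∏ j ∈ range (D - (k + 1)), f (k + 1 + j) := by
  rw [← prod_range_succ, ← prod_Ico_eq_prod_range, prod_range_mul_prod_Ico _ hk]

lemma prod_range_succ_eq_mul_prod_Icc (hD : 0 < D) :
    ∏ j ∈ range D, f (j + 1) = f D * ∏ j ∈ Icc 1 (D - 1), f j := by
  obtain ⟨n, rfl⟩ := Nat.exists_eq_add_of_lt hD
  rw [prod_range_succ, mul_comm, Nat.zero_add, Nat.add_sub_cancel, ← Ico_add_one_right_eq_Icc,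
    prod_Ico_eq_prod_range, Nat.add_sub_cancel]
  simp only [add_comm]

end Finset

lemma mulChain_eq_prodUpTo {d : ℕ → ℕ} (W : ∀ k, Matrix (Fin (d (k + 1))) (Fin (d k)) ℝ)
    (i l : ℕ) : mulChain d W i l = prodUpTo (fun l => d (i + l)) (fun l => W (i + l)) l := by
  induction l with
  | zero => rfl
  | succ l ih => rw [mulChain, prodUpTo, ih]

lemma trace_transpose_mul_mulChain {d : ℕ → ℕ}
    (W : ∀ k, Matrix (Fin (d (k + 1))) (Fin (d k)) ℝ) (i l : ℕ) :
    ((mulChain d W i l)ᵀ * mulChain d W i l).trace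
      = (prodUpTo (fun l => d (i + l)) (fun l => W (i + l)) l
          * (1 : Matrix (Fin (d i)) (Fin (d i)) ℝ)
          * (prodUpTo (fun l => d (i + l)) (fun l => W (i + l)) l)ᵀ).trace := by
  rw [Matrix.trace_mul_comm, mulChain_eq_prodUpTo, Matrix.mul_one]

section Chain

variable {Ω : Type*} {mΩ : MeasurableSpace Ω} {μ : Measure Ω} {d : ℕ → ℕ}
  {W : ∀ k, Ω → Matrix (Fin (d (k + 1))) (Fin (d k)) ℝ}

abbrev layersSigmaAlgebra (W : ∀ k, Ω → Matrix (Fin (d (k + 1))) (Fin (d k)) ℝ) (J : Set ℕ) :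
    MeasurableSpace Ω :=
  ⨆ j ∈ J, ⨆ a, ⨆ b, MeasurableSpace.comap (fun ω => W j ω a b) inferInstance

lemma layersSigmaAlgebra_le (hmeas : ∀ j a b, Measurable fun ω => W j ω a b) (J : Set ℕ) :
    layersSigmaAlgebra W J ≤ mΩ :=
  iSup₂_le fun j _ => iSup₂_le fun a b => (hmeas j a b).comap_le

lemma layersSigmaAlgebra_mono {J K : Set ℕ} (h : J ⊆ K) :
    layersSigmaAlgebra W J ≤ layersSigmaAlgebra W K :=
  biSup_mono fun _ hj => h hj

lemma measurable_layersSigmaAlgebra {J : Set ℕ} {j : ℕ} (hj : j ∈ J) (a b) :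
    Measurable[layersSigmaAlgebra W J] fun ω => W j ω a b :=
  Measurable.of_comap_le (le_iSup₂_of_le j hj (le_iSup₂_of_le a b le_rfl))

lemma layersSigmaAlgebra_shift (i : ℕ) (J : Set ℕ) :
    layersSigmaAlgebra (d := fun l => d (i + l)) (fun l => W (i + l)) J
      = layersSigmaAlgebra W ((i + ·) '' J) := by
  rw [layersSigmaAlgebra, layersSigmaAlgebra, iSup_image]
  rfl

lemma measurable_prodUpTo_apply (k : ℕ) :
    ∀ a b, Measurable[layersSigmaAlgebra W (Set.Iio k)]
      fun ω => prodUpTo d (fun j => W j ω) k a b := by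
  induction k with
  | zero => exact fun _ _ => measurable_const
  | succ k ih =>
    exact Matrix.measurable_mul_apply
      (fun a b => measurable_layersSigmaAlgebra (Set.mem_Iio.2 k.lt_succ_self) a b)
      (fun a b => (ih a b).mono (layersSigmaAlgebra_mono (Set.Iio_subset_Iio k.le_succ)) le_rfl)

lemma measurable_prodUpTo_sandwich_apply (S : Matrix (Fin (d 0)) (Fin (d 0)) ℝ) (k : ℕ) :
    ∀ a b, Measurable[layersSigmaAlgebra W (Set.Iio k)] fun ω =>
      (prodUpTo d (fun j => W j ω) k * S * (prodUpTo d (fun j => W j ω) k)ᵀ) a b :=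
  Matrix.measurable_mul_apply (Matrix.measurable_mul_apply (measurable_prodUpTo_apply k)
    fun _ _ => measurable_const) fun a b => measurable_prodUpTo_apply k b a

lemma prodUpTo_succ_sandwich (W : ∀ k, Matrix (Fin (d (k + 1))) (Fin (d k)) ℝ)
    (S : Matrix (Fin (d 0)) (Fin (d 0)) ℝ) (k : ℕ) :
    prodUpTo d W (k + 1) * S * (prodUpTo d W (k + 1))ᵀ
      = W k * (prodUpTo d W k * S * (prodUpTo d W k)ᵀ) * (W k)ᵀ := by
  simp only [prodUpTo, Matrix.transpose_mul, Matrix.mul_assoc]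

variable {N : ℕ}

lemma integrable_prodUpTo_sandwich_apply [IsFiniteMeasure μ]
    (hind : ∀ k < N, Indep (layersSigmaAlgebra W {k}) (layersSigmaAlgebra W (Set.Iio k)) μ)
    (hW2 : ∀ k < N, ∀ a b, MemLp (fun ω => W k ω a b) 2 μ)
    (S : Matrix (Fin (d 0)) (Fin (d 0)) ℝ) {n : ℕ} (hn : n ≤ N) :
    ∀ a b, Integrable (fun ω =>
      (prodUpTo d (fun j => W j ω) n * S * (prodUpTo d (fun j => W j ω) n)ᵀ) a b) μ := by
  induction n with
  | zero => simp [prodUpTo]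
  | succ k ih =>
    simp only [prodUpTo_succ_sandwich]
    exact Matrix.integrable_mul_mul_transpose_apply (hind k hn)
      (measurable_layersSigmaAlgebra rfl) (measurable_prodUpTo_sandwich_apply S k) (hW2 k hn)
      (ih (k.le_succ.trans hn))

lemma integral_trace_prodUpTo_sandwich_of_cov [IsProbabilityMeasure μ]
    (hmeas : ∀ j a b, Measurable fun ω => W j ω a b)
    (hind : ∀ k < N, Indep (layersSigmaAlgebra W {k}) (layersSigmaAlgebra W (Set.Iio k)) μ)
    (hW2 : ∀ k < N, ∀ a b, MemLp (fun ω => W k ω a b) 2 μ) {s : ℕ → ℝ}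
    (hcov : ∀ k < N, ∀ a b c, ∫ ω, W k ω a b * W k ω a c ∂μ = if b = c then s k else 0)
    (S : Matrix (Fin (d 0)) (Fin (d 0)) ℝ) {n : ℕ} (hn : n ≤ N) :
    ∫ ω, (prodUpTo d (fun j => W j ω) n * S * (prodUpTo d (fun j => W j ω) n)ᵀ).trace ∂μ
      = S.trace * ∏ j ∈ Finset.range n, (d (j + 1) * s j) := by
  induction n with
  | zero => simp [prodUpTo]
  | succ k ih =>
    simp only [prodUpTo_succ_sandwich]
    rw [Matrix.integral_trace_mul_mul_transpose (layersSigmaAlgebra_le hmeas _) (hind k hn)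
      (measurable_layersSigmaAlgebra rfl) (measurable_prodUpTo_sandwich_apply S k) (hW2 k hn)
      (integrable_prodUpTo_sandwich_apply hind hW2 S (k.le_succ.trans hn)) (hcov k hn),
      ih (k.le_succ.trans hn), Finset.prod_range_succ, Fintype.card_fin]
    ring

end Chain

section GaussianInit

variable {Ω : Type*} [MeasurableSpace Ω] {μ : Measure Ω} {d : ℕ → ℕ}

abbrev WeightIndex (D : ℕ) (d : ℕ → ℕ) : Type :=
  Σ j : Fin D, Fin (d ((j : ℕ) + 1)) × Fin (d (j : ℕ))

structure IsGaussianInit (μ : Measure Ω) (D : ℕ)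
    (W : ∀ j, Ω → Matrix (Fin (d (j + 1))) (Fin (d j)) ℝ) (σ : ℕ → ℝ≥0) : Prop where
  measurable : ∀ j a b, Measurable fun ω => W j ω a b
  indep : iIndepFun (fun (p : WeightIndex D d) (ω : Ω) => W (p.1 : ℕ) ω p.2.1 p.2.2) μ
  map_eq : ∀ j < D, ∀ a b, μ.map (fun ω => W j ω a b) = gaussianReal 0 (σ j ^ 2)

namespace IsGaussianInit

variable {D : ℕ} {W : ∀ j, Ω → Matrix (Fin (d (j + 1))) (Fin (d j)) ℝ} {σ : ℕ → ℝ≥0}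

lemma indep_layersSigmaAlgebra (h : IsGaussianInit μ D W σ) {J K : Set ℕ}
    (hJ : J ⊆ Set.Iio D) (hK : K ⊆ Set.Iio D) (hJK : Disjoint J K) :
    Indep (layersSigmaAlgebra W J) (layersSigmaAlgebra W K) μ := by
  have hentries := indep_iSup_of_disjoint
    (fun p : WeightIndex D d => (h.measurable _ p.2.1 p.2.2).comap_le) h.indep.iIndep
    (S := {p | (p.1 : ℕ) ∈ J}) (T := {p | (p.1 : ℕ) ∈ K})
    (Set.disjoint_left.2 fun _ hpJ hpK => Set.disjoint_left.1 hJK hpJ hpK)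
  have hle : ∀ L ⊆ Set.Iio D, layersSigmaAlgebra W L ≤
      ⨆ p ∈ {p : WeightIndex D d | (p.1 : ℕ) ∈ L},
        MeasurableSpace.comap (fun ω => W p.1 ω p.2.1 p.2.2) inferInstance :=
    fun L hL => iSup₂_le fun j hj => iSup₂_le fun a b =>
      le_iSup₂_of_le (f := fun (p : WeightIndex D d) _ => MeasurableSpace.comap
        (fun ω => W (p.1 : ℕ) ω p.2.1 p.2.2) inferInstance) ⟨⟨j, hL hj⟩, (a, b)⟩ hj le_rfl
  exact indep_of_indep_of_le hentries (hle J hJ) (hle K hK)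

lemma memLp_entry (h : IsGaussianInit μ D W σ) {j : ℕ} (hj : j < D) (a b) :
    MemLp (fun ω => W j ω a b) 2 μ :=
  memLp_of_map_eq_gaussianReal (h.measurable j a b).aemeasurable (h.map_eq j hj a b)
    ENNReal.ofNat_ne_top

lemma integral_entry_mul_entry [IsProbabilityMeasure μ] (h : IsGaussianInit μ D W σ) {j : ℕ}
    (hj : j < D) (a : Fin (d (j + 1))) (b c : Fin (d j)) :
    ∫ ω, W j ω a b * W j ω a c ∂μ = if b = c then (σ j : ℝ) ^ 2 else 0 := by
  have hmean := fun b => integral_of_map_eq_gaussianReal (h.measurable j a b).aemeasurable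
    (h.map_eq j hj a b)
  split_ifs with hbc
  · subst hbc
    simp_rw [← sq]
    rw [integral_sq_of_map_eq_gaussianReal (h.measurable j a b).aemeasurable (h.map_eq j hj a b)]
    push_cast
    ring
  · have hne : (⟨⟨j, hj⟩, (a, b)⟩ : WeightIndex D d) ≠ ⟨⟨j, hj⟩, (a, c)⟩ := by simp [hbc]
    rw [(h.indep.indepFun hne).integral_fun_mul_eq_mul_integral
      (h.measurable j a b).aestronglyMeasurable (h.measurable j a c).aestronglyMeasurable,
      hmean b, zero_mul]

lemma indep_layersSigmaAlgebra_singleton_Iio (h : IsGaussianInit μ D W σ) {k : ℕ}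
    (hk : k < D) :
    Indep (layersSigmaAlgebra W {k}) (layersSigmaAlgebra W (Set.Iio k)) μ :=
  h.indep_layersSigmaAlgebra (Set.singleton_subset_iff.2 hk) (Set.Iio_subset_Iio hk.le)
    (Set.disjoint_singleton_left.2 (lt_irrefl k))

lemma indep_layersSigmaAlgebra_shift_singleton_Iio (h : IsGaussianInit μ D W σ) {i l : ℕ}
    (hl : i + l < D) :
    Indep (layersSigmaAlgebra (d := fun j => d (i + j)) (fun j => W (i + j)) {l})
      (layersSigmaAlgebra (d := fun j => d (i + j)) (fun j => W (i + j)) (Set.Iio l)) μ := by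
  rw [layersSigmaAlgebra_shift, layersSigmaAlgebra_shift, Set.image_singleton]
  refine h.indep_layersSigmaAlgebra (Set.singleton_subset_iff.2 hl) ?_ ?_
  · rintro _ ⟨j, hj, rfl⟩
    exact lt_trans (Nat.add_lt_add_left hj i) hl
  · rw [Set.disjoint_singleton_left]
    rintro ⟨j, hj, hij⟩
    exact (Set.mem_Iio.1 hj).ne (Nat.add_left_cancel hij)

lemma indepFun_trace_mulChain_trace_prodUpTo (h : IsGaussianInit μ D W σ)
    (S : Matrix (Fin (d 0)) (Fin (d 0)) ℝ) {k : ℕ} (hk : k < D) :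
    IndepFun
      (fun ω => ((mulChain d (fun j => W j ω) (k + 1) (D - (k + 1)))ᵀ
        * mulChain d (fun j => W j ω) (k + 1) (D - (k + 1))).trace)
      (fun ω => (prodUpTo d (fun j => W j ω) k * S * (prodUpTo d (fun j => W j ω) k)ᵀ).trace)
      μ := by
  have hA := Matrix.measurable_trace (measurable_prodUpTo_sandwich_apply
    (d := fun j => d (k + 1 + j)) (W := fun j => W (k + 1 + j)) 1 (D - (k + 1)))
  rw [layersSigmaAlgebra_shift] at hA
  simp only [trace_transpose_mul_mulChain]
  refine (h.indep_layersSigmaAlgebra ?_ (Set.Iio_subset_Iio hk.le) ?_).indepFun hA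
    (Matrix.measurable_trace (measurable_prodUpTo_sandwich_apply S k))
  · rintro _ ⟨j, hj, rfl⟩
    simp only [Set.mem_Iio] at hj ⊢
    omega
  · rw [Set.disjoint_left]
    rintro _ ⟨j, -, rfl⟩ hj
    simp only [Set.mem_Iio] at hj
    omega

variable [IsProbabilityMeasure μ]

lemma integrable_trace_prodUpTo_sandwich (h : IsGaussianInit μ D W σ)
    (S : Matrix (Fin (d 0)) (Fin (d 0)) ℝ) {k : ℕ} (hk : k ≤ D) :
    Integrable (fun ω =>
      (prodUpTo d (fun j => W j ω) k * S * (prodUpTo d (fun j => W j ω) k)ᵀ).trace) μ :=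
  Matrix.integrable_trace (integrable_prodUpTo_sandwich_apply
    (fun _ hj => h.indep_layersSigmaAlgebra_singleton_Iio hj) (fun _ hj => h.memLp_entry hj) S hk)

lemma integral_trace_prodUpTo_sandwich (h : IsGaussianInit μ D W σ)
    (S : Matrix (Fin (d 0)) (Fin (d 0)) ℝ) {k : ℕ} (hk : k ≤ D) :
    ∫ ω, (prodUpTo d (fun j => W j ω) k * S * (prodUpTo d (fun j => W j ω) k)ᵀ).trace ∂μ
      = S.trace * ∏ j ∈ Finset.range k, (d (j + 1) * (σ j : ℝ) ^ 2) :=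
  integral_trace_prodUpTo_sandwich_of_cov h.measurable
    (fun _ hj => h.indep_layersSigmaAlgebra_singleton_Iio hj) (fun _ hj => h.memLp_entry hj)
    (fun _ hj => h.integral_entry_mul_entry hj) S hk

lemma integrable_trace_transpose_mul_mulChain (h : IsGaussianInit μ D W σ) {i l : ℕ}
    (hil : i + l ≤ D) :
    Integrable (fun ω =>
      ((mulChain d (fun j => W j ω) i l)ᵀ * mulChain d (fun j => W j ω) i l).trace) μ := by
  simp only [trace_transpose_mul_mulChain]
  exact Matrix.integrable_trace (integrable_prodUpTo_sandwich_apply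
    (fun j hj => h.indep_layersSigmaAlgebra_shift_singleton_Iio (i := i) (l := j) (by omega))
    (fun j hj => h.memLp_entry (j := i + j) (by omega)) 1 le_rfl)

lemma integral_trace_transpose_mul_mulChain (h : IsGaussianInit μ D W σ) {i l : ℕ}
    (hil : i + l ≤ D) :
    ∫ ω, ((mulChain d (fun j => W j ω) i l)ᵀ * mulChain d (fun j => W j ω) i l).trace ∂μ
      = d i * ∏ j ∈ Finset.range l, (d (i + j + 1) * (σ (i + j) : ℝ) ^ 2) := by
  simp only [trace_transpose_mul_mulChain]
  rw [integral_trace_prodUpTo_sandwich_of_cov (fun j => h.measurable (i + j))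
    (fun j hj => h.indep_layersSigmaAlgebra_shift_singleton_Iio (i := i) (l := j) (by omega))
    (fun j hj => h.memLp_entry (j := i + j) (by omega))
    (fun j hj => h.integral_entry_mul_entry (j := i + j) (by omega)) 1 le_rfl]
  simp [Matrix.trace_one, add_assoc]

lemma integral_sharpnessT (h : IsGaussianInit μ D W σ)
    (Sx : Matrix (Fin (d 0)) (Fin (d 0)) ℝ) :
    ∫ ω, sharpnessT d (fun k => W k ω) Sx D ∂μ
      = (d D : ℝ) * (∏ k ∈ Finset.Icc 1 (D - 1), (d k : ℝ)) * Sx.trace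
          * ∑ k ∈ Finset.range D, ∏ j ∈ (Finset.range D).erase k, (σ j : ℝ) ^ 2 := by
  have hA {k} (hk : k < D) := h.integrable_trace_transpose_mul_mulChain (i := k + 1)
    (l := D - (k + 1)) (by omega)
  have hB {k} (hk : k < D) := h.integrable_trace_prodUpTo_sandwich Sx hk.le
  simp only [sharpnessT]
  rw [integral_finsetSum, Finset.mul_sum]
  swap
  · exact fun k hk => (h.indepFun_trace_mulChain_trace_prodUpTo Sx (mem_range.1 hk)
      ).integrable_mul (hA (mem_range.1 hk)) (hB (mem_range.1 hk))
  refine Finset.sum_congr rfl fun k hk => ?_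
  rw [Finset.mem_range] at hk
  rw [(h.indepFun_trace_mulChain_trace_prodUpTo Sx hk).integral_fun_mul_eq_mul_integral
      (hA hk).aestronglyMeasurable (hB hk).aestronglyMeasurable,
    h.integral_trace_transpose_mul_mulChain (by omega),
    h.integral_trace_prodUpTo_sandwich Sx hk.le,
    Finset.prod_mul_distrib, Finset.prod_mul_distrib,
    ← Finset.prod_range_succ_eq_mul_prod_Icc (fun j => (d j : ℝ)) (by omega),
    Finset.prod_range_eq_mul_mul (fun j => (d (j + 1) : ℝ)) hk,
    Finset.prod_range_erase_eq_mul _ hk]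
  ring

end IsGaussianInit

end GaussianInit

theorem expected_initial_sharpness_general (D : ℕ) (d : ℕ → ℕ)
    {Ω : Type*} [MeasurableSpace Ω] (μ : Measure Ω) [IsProbabilityMeasure μ]
    (W : ∀ j : ℕ, Ω → Matrix (Fin (d (j + 1))) (Fin (d j)) ℝ)
    (σ : ℕ → NNReal)
    (hmeas : ∀ (j : ℕ) a b, Measurable fun ω => W j ω a b)
    (hindep : iIndepFun
      (fun (p : Σ j : Fin D, Fin (d ((j : ℕ) + 1)) × Fin (d (j : ℕ))) (ω : Ω) =>
        W (p.1 : ℕ) ω p.2.1 p.2.2) μ)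
    (hgauss : ∀ j : ℕ, j < D → ∀ a b,
      Measure.map (fun ω => W j ω a b) μ = gaussianReal 0 (σ j ^ 2))
    (Sx : Matrix (Fin (d 0)) (Fin (d 0)) ℝ) :
    (∫ ω, sharpnessT d (fun k => W k ω) Sx D ∂μ
        = (d D : ℝ) * (∏ k ∈ Finset.Icc 1 (D - 1), (d k : ℝ)) * Sx.trace
          * ∑ k ∈ Finset.range D, ∏ j ∈ (Finset.range D).erase k, (σ j : ℝ) ^ 2)
    ∧ ∀ (σc : NNReal) (dc : ℕ), (∀ k, k < D → σ k = σc) →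
        (∀ k, 1 ≤ k → k ≤ D - 1 → d k = dc) →
        ∫ ω, sharpnessT d (fun k => W k ω) Sx D ∂μ
          = (D : ℝ) * (d D : ℝ) * Sx.trace * ((dc : ℝ) * (σc : ℝ) ^ 2) ^ (D - 1) := by
  have hmain := IsGaussianInit.integral_sharpnessT ⟨hmeas, hindep, hgauss⟩ Sx
  refine ⟨hmain, fun σc dc hσ hd => ?_⟩
  have hσ_prod : ∀ k ∈ range D, ∏ j ∈ (range D).erase k, (σ j : ℝ) ^ 2
      = ((σc : ℝ) ^ 2) ^ (D - 1) := fun k hk => by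
    rw [prod_congr rfl fun j hj => by rw [hσ j (mem_range.1 (mem_of_mem_erase hj))],
      prod_const, card_erase_of_mem hk, card_range]
  have hd_prod : ∏ k ∈ Icc 1 (D - 1), (d k : ℝ) = (dc : ℝ) ^ (D - 1) := by
    rw [prod_congr rfl fun k hk => by rw [hd k (mem_Icc.1 hk).1 (mem_Icc.1 hk).2], prod_const,
      Nat.card_Icc, Nat.add_sub_cancel]
  rw [hmain, sum_congr rfl hσ_prod, sum_const, card_range, nsmul_eq_mul, hd_prod, mul_pow]
  ring

/-- Expected sharpness at Gaussian initialization: for a `D`-layer linear network whose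
weight entries are jointly independent centered Gaussians (entries of `W_k` of variance
`σ_k²`), the expected sharpness is
`E[T] = d_y (∏_{k=2}^D d_k) Tr(Σ_x) Σ_{k=1}^D ∏_{j≠k} σ_j²`; in particular, if
`σ_k = σ` for all layers and all intermediate dimensions equal `d`, then
`E[T] = D d_y Tr(Σ_x) (d σ²)^{D−1}`. -/
theorem expected_initial_sharpness (D : ℕ) (hD : 1 ≤ D) (d : ℕ → ℕ)
    {Ω : Type*} [MeasurableSpace Ω] (μ : Measure Ω) [IsProbabilityMeasure μ]
    (W : ∀ j : ℕ, Ω → Matrix (Fin (d (j + 1))) (Fin (d j)) ℝ)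
    (σ : ℕ → NNReal)
    (hmeas : ∀ (j : ℕ) a b, Measurable fun ω => W j ω a b)
    (hindep : iIndepFun
      (fun (p : Σ j : Fin D, Fin (d ((j : ℕ) + 1)) × Fin (d (j : ℕ))) (ω : Ω) =>
        W (p.1 : ℕ) ω p.2.1 p.2.2) μ)
    (hgauss : ∀ j : ℕ, j < D → ∀ a b,
      Measure.map (fun ω => W j ω a b) μ = gaussianReal 0 (σ j ^ 2))
    (Sx : Matrix (Fin (d 0)) (Fin (d 0)) ℝ) (hSx : Sx.PosSemidef) :
    (∫ ω, sharpnessT d (fun k => W k ω) Sx D ∂μ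
        = (d D : ℝ) * (∏ k ∈ Finset.Icc 1 (D - 1), (d k : ℝ)) * Sx.trace
          * ∑ k ∈ Finset.range D, ∏ j ∈ (Finset.range D).erase k, (σ j : ℝ) ^ 2)
    ∧ ∀ (σc : NNReal) (dc : ℕ), (∀ k, k < D → σ k = σc) →
        (∀ k, 1 ≤ k → k ≤ D - 1 → d k = dc) →
        ∫ ω, sharpnessT d (fun k => W k ω) Sx D ∂μ
          = (D : ℝ) * (d D : ℝ) * Sx.trace * ((dc : ℝ) * (σc : ℝ) ^ 2) ^ (D - 1) :=
  expected_initial_sharpness_general D d μ W σ hmeas hindep hgauss Sx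
end
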